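/- arXiv:1007.4915 — 7 statements merged into one kernel-verified Lean document; each statement's English description precedes it below -/
import Mathlib

section
/- Fix a > 0. There exists an absolute constant c > 0 such that for infinitely many n ∈ ℕ there is a set F ⊆ {-1,1}^n with VC dimension d such that every pair of distinct x, y ∈ F satisfies |⟨x,y⟩| ≤ d^{-a}, and |F| ≥ exp(c·n^{1/(2a+1)}). -/
open Finset

/-- Normalized inner product on `{-1,1}^n`. -/
noncomputable def ipNorm (n : ℕ) (x y : Fin n → ℤ) : ℝ := ((∑ i, x i * y i : ℤ) : ℝ) / n

/-- `F` shatters the index set `I`: every `±1` pattern on `I` is realized by some `x ∈ F`. -/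
def Shatters (n : ℕ) (F : Finset (Fin n → ℤ)) (I : Finset (Fin n)) : Prop :=
  ∀ g : Fin n → ℤ, (∀ i ∈ I, g i = 1 ∨ g i = -1) → ∃ x ∈ F, ∀ i ∈ I, x i = g i

/-!
Let `F = {(u, f u) : u ∈ {±1}^d} ⊆ {±1}^(d+m)`, where `f` maps `{±1}^d` injectively into a code
in `{±1}^m` whose distinct words have correlation less than `s = m d^(-a) / 2`. The first `d`
coordinates are shattered and `|F| = 2^d`, so the VC dimension is exactly `d`, and two words of `F`
have correlation at most `d + s ≤ (d + m) d^(-a)`. The code is chosen greedily: by the Chernoff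
bound a word has correlation at least `s` with at most `2^(m+1) e^(-s²/2m)` words, which is less
than `2^(m-d)` once `m ≥ 16 d^(2a+1)`. Taking `m ≈ 16 d^(2a+1)` gives `n = d + m ≤ 18 d^(2a+1)`,
hence `|F| = 2^d ≥ exp ((log 2 / 18) n^(1/(2a+1)))`.
-/

open Real

theorem exists_card_eq_pairwise_not_rel {α : Type*} [Fintype α] [Nonempty α] [DecidableEq α]
    (r : α → α → Prop) [DecidableRel r] (hrefl : ∀ x, r x x) (hsymm : ∀ x y, r x y → r y x)
    {B : ℝ} (hB : ∀ x, (#{y | r x y} : ℝ) ≤ B) {k : ℕ} (hk : k * B < Fintype.card α) :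
    ∃ C : Finset α, #C = k ∧ (C : Set α).Pairwise fun x y => ¬ r x y := by
  induction k with
  | zero => exact ⟨∅, by simp⟩
  | succ k ih =>
    have hB0 : 0 ≤ B := (Nat.cast_nonneg _).trans (hB (Classical.arbitrary α))
    push_cast at hk
    obtain ⟨C, hC, hCr⟩ := ih (by linarith)
    set bad := C.biUnion fun y => ({w | r y w} : Finset α)
    have hbad : (#bad : ℝ) < #(univ : Finset α) := calc
      (#bad : ℝ) ≤ ∑ y ∈ C, (#{w | r y w} : ℝ) := mod_cast card_biUnion_le
      _ ≤ ∑ _y ∈ C, B := sum_le_sum fun y _ => hB y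
      _ = k * B := by simp [hC]
      _ < #(univ : Finset α) := by rw [card_univ]; linarith
    obtain ⟨z, -, hz⟩ := exists_mem_notMem_of_card_lt_card (mod_cast hbad)
    have hzC : ∀ y ∈ C, ¬ r y z := fun y hy h => hz (mem_biUnion.2 ⟨y, hy, by simpa using h⟩)
    have hzC' : z ∉ C := fun h => hzC z h (hrefl z)
    refine ⟨insert z C, by rw [card_insert_of_notMem hzC', hC], ?_⟩
    rw [coe_insert]
    exact hCr.insert_of_notMem hzC' fun y hy => ⟨fun h => hzC y hy (hsymm _ _ h), hzC y hy⟩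

/-- Points of `{-1,1}^ι` are encoded as `ι → Bool`, read through `boolSign`. -/
def boolSign (b : Bool) : ℤ := if b then 1 else -1

lemma boolSign_eq_one_or_eq_neg_one (b : Bool) : boolSign b = 1 ∨ boolSign b = -1 := by
  cases b <;> simp [boolSign]

lemma boolSign_injective : Function.Injective boolSign := by
  intro b c; cases b <;> cases c <;> simp [boolSign]

@[simp] lemma boolSign_mul_self (b : Bool) : boolSign b * boolSign b = 1 := by
  cases b <;> simp [boolSign]

@[simp] lemma abs_boolSign (b : Bool) : |boolSign b| = 1 := by
  cases b <;> simp [boolSign]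

@[simp] lemma boolSign_not (b : Bool) : boolSign (!b) = -boolSign b := by
  cases b <;> simp [boolSign]

section Correlation

variable {ι : Type*} [Fintype ι]

def corr (y z : ι → Bool) : ℤ := ∑ i, boolSign (y i) * boolSign (z i)

lemma corr_comm (y z : ι → Bool) : corr y z = corr z y := by
  simp [corr, mul_comm]

@[simp] lemma corr_self (y : ι → Bool) : corr y y = Fintype.card ι := by
  simp [corr]

lemma corr_not_left (y z : ι → Bool) : corr (fun i => !y i) z = -corr y z := by
  simp [corr, ← sum_neg_distrib]

lemma abs_corr_le (y z : ι → Bool) : |corr y z| ≤ Fintype.card ι := by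
  calc |corr y z| ≤ ∑ i, |boolSign (y i) * boolSign (z i)| := abs_sum_le_sum_abs _ _
    _ = Fintype.card ι := by simp [abs_mul]

lemma corr_append {d m : ℕ} (y z : Fin d → Bool) (y' z' : Fin m → Bool) :
    corr (Fin.append y y') (Fin.append z z') = corr y z + corr y' z' := by
  simp [corr, Fin.sum_univ_add]

variable [DecidableEq ι]

lemma sum_exp_mul_corr (y : ι → Bool) (t : ℝ) :
    ∑ z : ι → Bool, exp (t * corr y z) = (2 * cosh t) ^ Fintype.card ι := by
  have hfactor : ∀ i, ∑ b : Bool, exp (t * (boolSign (y i) * boolSign b)) = 2 * cosh t := by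
    intro i
    cases y i <;> simp [boolSign, cosh_eq] <;> ring
  simp_rw [corr, Int.cast_sum, Int.cast_mul, mul_sum, exp_sum]
  rw [← Fintype.prod_sum fun i b => exp (t * (boolSign (y i) * boolSign b)),
    prod_congr rfl fun i _ => hfactor i, prod_const, card_univ]

lemma card_le_corr_le (y : ι → Bool) {s : ℝ} (hs : 0 ≤ s) (hι : 0 < Fintype.card ι) :
    (#{z | s ≤ (corr y z : ℝ)} : ℝ) ≤
      2 ^ Fintype.card ι * exp (-s ^ 2 / (2 * Fintype.card ι)) := by
  set m : ℝ := (Fintype.card ι : ℝ)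
  have hm : 0 < m := by simpa [m] using hι
  set t := s / m
  have hmarkov :
      (#{z | s ≤ (corr y z : ℝ)} : ℝ) * exp (t * s) ≤ (2 * cosh t) ^ Fintype.card ι := by
    rw [← sum_exp_mul_corr y t, ← nsmul_eq_mul]
    calc _ ≤ ∑ z ∈ {z | s ≤ (corr y z : ℝ)}, exp (t * corr y z) :=
          card_nsmul_le_sum _ _ _ fun z hz => exp_le_exp.2 <|
            mul_le_mul_of_nonneg_left (mem_filter.1 hz).2 (by positivity)
      _ ≤ _ := sum_le_sum_of_subset_of_nonneg (subset_univ _) fun _ _ _ => (exp_pos _).le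
  have hcosh : (2 * cosh t) ^ Fintype.card ι ≤ 2 ^ Fintype.card ι * exp (m * (t ^ 2 / 2)) := by
    rw [exp_nat_mul, ← mul_pow]
    exact pow_le_pow_left₀ (by positivity) (by gcongr; exact cosh_le_exp_half_sq t) _
  have hexp : exp (m * (t ^ 2 / 2)) = exp (-s ^ 2 / (2 * m)) * exp (t * s) := by
    rw [← exp_add]; congr 1; simp only [t]; field_simp; ring
  rw [hexp, ← mul_assoc] at hcosh
  exact le_of_mul_le_mul_right (hmarkov.trans hcosh) (exp_pos _)

lemma card_le_abs_corr_le (y : ι → Bool) {s : ℝ} (hs : 0 ≤ s) (hι : 0 < Fintype.card ι) :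
    (#{z | s ≤ |(corr y z : ℝ)|} : ℝ) ≤
      2 * 2 ^ Fintype.card ι * exp (-s ^ 2 / (2 * Fintype.card ι)) := by
  have hsub : ({z | s ≤ |(corr y z : ℝ)|} : Finset _) ⊆
      ({z | s ≤ (corr y z : ℝ)} : Finset _) ∪
        ({z | s ≤ (corr (fun i => !y i) z : ℝ)} : Finset _) := by
    intro z hz
    simp only [mem_filter, mem_univ, true_and, mem_union, corr_not_left, Int.cast_neg] at hz ⊢
    exact le_abs.1 hz
  calc (#{z | s ≤ |(corr y z : ℝ)|} : ℝ)
      ≤ #{z | s ≤ (corr y z : ℝ)} + #{z | s ≤ (corr (fun i => !y i) z : ℝ)} :=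
        mod_cast (card_le_card hsub).trans (card_union_le _ _)
    _ ≤ _ := by linarith [card_le_corr_le y hs hι, card_le_corr_le (fun i => !y i) hs hι]

end Correlation

lemma exists_lowCorrelation_code {ι : Type*} [Fintype ι] [DecidableEq ι] (d : ℕ) {s : ℝ}
    (hs : 0 ≤ s) (hsι : s ≤ Fintype.card ι) (hι : 0 < Fintype.card ι)
    (hd : (d + 1) * log 2 < s ^ 2 / (2 * Fintype.card ι)) :
    ∃ f : (Fin d → Bool) → ι → Bool, ∀ u v, u ≠ v → |(corr (f u) (f v) : ℝ)| < s := by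
  set q := s ^ 2 / (2 * Fintype.card ι)
  have hk : ((2 ^ d : ℕ) : ℝ) * (2 * 2 ^ Fintype.card ι * exp (-s ^ 2 / (2 * Fintype.card ι)))
      < Fintype.card (ι → Bool) := by
    have h2q : (2 : ℝ) ^ (d + 1) < exp q := by
      rwa [← exp_log two_pos, ← exp_nat_mul, exp_lt_exp, Nat.cast_succ]
    rw [Fintype.card_fun, Fintype.card_bool, neg_div, exp_neg]
    push_cast
    calc (2 : ℝ) ^ d * (2 * 2 ^ Fintype.card ι * (exp q)⁻¹)
        = 2 ^ (d + 1) / exp q * 2 ^ Fintype.card ι := by ring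
      _ < 1 * 2 ^ Fintype.card ι := by gcongr; rwa [div_lt_one (exp_pos q)]
      _ = _ := one_mul _
  obtain ⟨C, hC, hCs⟩ := exists_card_eq_pairwise_not_rel (fun y z => s ≤ |(corr y z : ℝ)|)
    (fun y => by simpa using hsι) (fun y z => by simp [corr_comm])
    (fun y => card_le_abs_corr_le y hs hι) hk
  have e : (Fin d → Bool) ≃ C := Fintype.equivOfCardEq (by simp [hC])
  exact ⟨fun u => e u, fun u v huv => not_le.1 <| hCs (e u).2 (e v).2 <| by simpa using huv⟩

section CodeFamily

variable {d m : ℕ} (f : (Fin d → Bool) → Fin m → Bool)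

def codeFamily : Finset (Fin (d + m) → ℤ) :=
  univ.image fun u i => boolSign (Fin.append u (f u) i)

lemma eq_one_or_eq_neg_one_of_mem_codeFamily : ∀ x ∈ codeFamily f, ∀ i, x i = 1 ∨ x i = -1 := by
  simp only [codeFamily, mem_image, mem_univ, true_and]
  rintro x ⟨u, rfl⟩ i
  exact boolSign_eq_one_or_eq_neg_one _

lemma card_codeFamily : #(codeFamily f) = 2 ^ d := by
  rw [codeFamily, card_image_of_injective, card_univ, Fintype.card_fun, Fintype.card_bool,
    Fintype.card_fin]
  intro u v huv
  funext j
  simpa using boolSign_injective (congrFun huv (Fin.castAdd m j))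

lemma shatters_codeFamily : Shatters (d + m) (codeFamily f) (univ.map (Fin.castAddEmb m)) := by
  intro g hg
  refine ⟨_, mem_image_of_mem _ (mem_univ fun j => decide (g (Fin.castAdd m j) = 1)), ?_⟩
  simp only [mem_map, mem_univ, true_and, Fin.coe_castAddEmb]
  rintro _ ⟨j, rfl⟩
  rcases hg (Fin.castAdd m j) (by simp) with h | h <;> simp [h, boolSign]

lemma Shatters.two_pow_card_le {n : ℕ} {F : Finset (Fin n → ℤ)} {I : Finset (Fin n)}
    (h : Shatters n F I) : 2 ^ #I ≤ #F := by
  have hpattern : ∀ p : I → Bool, ∃ x ∈ F, ∀ i : I, x i = boolSign (p i) := by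
    intro p
    obtain ⟨x, hxF, hx⟩ := h (fun i => if hi : i ∈ I then boolSign (p ⟨i, hi⟩) else 1)
      fun i hi => by simpa [hi] using boolSign_eq_one_or_eq_neg_one _
    exact ⟨x, hxF, fun i => by simpa using hx i i.2⟩
  choose x hxF hx using hpattern
  have hinj : Function.Injective fun p => (⟨x p, hxF p⟩ : F) := by
    intro p q hpq
    funext i
    apply boolSign_injective
    rw [← hx, ← hx]
    exact congrFun (congrArg Subtype.val hpq) i
  simpa using Fintype.card_le_of_injective _ hinj

lemma isGreatest_codeFamily :
    IsGreatest {k | ∃ I : Finset (Fin (d + m)), #I = k ∧ Shatters (d + m) (codeFamily f) I} d := by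
  refine ⟨⟨_, by simp, shatters_codeFamily f⟩, ?_⟩
  rintro k ⟨I, rfl, hI⟩
  have := hI.two_pow_card_le
  rw [card_codeFamily] at this
  exact (Nat.pow_le_pow_iff_right (by norm_num)).1 this

lemma abs_ipNorm_codeFamily_le {s : ℝ} (hf : ∀ u v, u ≠ v → |(corr (f u) (f v) : ℝ)| ≤ s) :
    ∀ x ∈ codeFamily f, ∀ y ∈ codeFamily f, x ≠ y → |ipNorm (d + m) x y| ≤ (d + s) / (d + m) := by
  simp only [codeFamily, mem_image, mem_univ, true_and]
  rintro _ ⟨u, rfl⟩ _ ⟨v, rfl⟩ huv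
  have hsum : ∑ i, boolSign (Fin.append u (f u) i) * boolSign (Fin.append v (f v) i)
      = corr u v + corr (f u) (f v) := corr_append u v (f u) (f v)
  rw [ipNorm, hsum, abs_div, Nat.abs_cast, Nat.cast_add, Int.cast_add]
  gcongr
  calc |(corr u v : ℝ) + corr (f u) (f v)| ≤ |(corr u v : ℝ)| + |(corr (f u) (f v) : ℝ)| :=
        abs_add_le _ _
    _ ≤ d + s := by
        gcongr
        · simpa using (Int.cast_le (R := ℝ)).2 (abs_corr_le u v)
        · exact hf u v fun h => huv (by rw [h])

end CodeFamily

theorem exists_lowCorrelation_family (d m : ℕ) {q : ℝ} (hd : 1 ≤ d) (hq0 : 0 ≤ q) (hq1 : q ≤ 1)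
    (h : 16 * d ≤ m * q ^ 2) :
    ∃ F : Finset (Fin (d + m) → ℤ), (∀ x ∈ F, ∀ i, x i = 1 ∨ x i = -1) ∧
      IsGreatest {k | ∃ I : Finset (Fin (d + m)), #I = k ∧ Shatters (d + m) F I} d ∧
      (∀ x ∈ F, ∀ y ∈ F, x ≠ y → |ipNorm (d + m) x y| ≤ q) ∧ #F = 2 ^ d := by
  have hd' : (1 : ℝ) ≤ d := mod_cast hd
  have hmq : m * q ^ 2 ≤ m * q := by gcongr; nlinarith
  have hm : 0 < m := by
    by_contra! hm0
    simp only [Nat.le_zero.1 hm0, CharP.cast_eq_zero, zero_mul] at h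
    linarith
  have hcode : (d + 1) * log 2 < (m * q / 2) ^ 2 / (2 * m) := by
    have : (m * q / 2) ^ 2 / (2 * m) = m * q ^ 2 / 8 := by field_simp; ring
    nlinarith [log_two_lt_d9]
  obtain ⟨f, hf⟩ := exists_lowCorrelation_code (ι := Fin m) (s := m * q / 2) d (by positivity)
    (by simp; nlinarith) (by simpa using hm) (by rwa [Fintype.card_fin])
  refine ⟨codeFamily f, eq_one_or_eq_neg_one_of_mem_codeFamily f, isGreatest_codeFamily f,
    fun x hx y hy hxy => ?_, card_codeFamily f⟩
  refine (abs_ipNorm_codeFamily_le f (fun u v huv => (hf u v huv).le) x hx y hy hxy).trans ?_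
  rw [div_le_iff₀ (by positivity)]
  nlinarith

lemma rpow_one_div_le_of_le_mul_rpow {x C D p : ℝ} (hx : 0 ≤ x) (hC : 1 ≤ C) (hD : 0 ≤ D)
    (hp : 1 ≤ p) (h : x ≤ C * D ^ p) : x ^ (1 / p) ≤ C * D := calc
  x ^ (1 / p) ≤ (C * D ^ p) ^ (1 / p) := by gcongr
  _ = C ^ (1 / p) * D := by
    rw [mul_rpow (by positivity) (by positivity), ← rpow_mul hD,
      mul_one_div_cancel (by positivity), rpow_one]
  _ ≤ C * D := by
    gcongr
    exact (rpow_le_rpow_of_exponent_le hC ((div_le_one (by positivity)).2 hp)).trans_eq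
      (rpow_one C)

/-- Fix `a > 0`. There is an absolute constant `c > 0` such that for infinitely many `n`
there is `F ⊆ {-1,1}^n` with VC dimension `d`, all distinct pairs `|⟨x,y⟩| ≤ d^(-a)`,
and `|F| ≥ exp(c·n^(1/(2a+1)))`. -/
theorem stmt2 (a : ℝ) (ha : 0 < a) :
    ∃ c : ℝ, 0 < c ∧ ∀ N : ℕ, ∃ n : ℕ, N ≤ n ∧
      ∃ (F : Finset (Fin n → ℤ)) (d : ℕ),
        (∀ x ∈ F, ∀ i, x i = 1 ∨ x i = -1) ∧
        IsGreatest {k : ℕ | ∃ I : Finset (Fin n), I.card = k ∧ Shatters n F I} d ∧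
        (∀ x ∈ F, ∀ y ∈ F, x ≠ y → |ipNorm n x y| ≤ (d : ℝ) ^ (-a)) ∧
        Real.exp (c * (n : ℝ) ^ (1 / (2 * a + 1))) ≤ (F.card : ℝ) := by
  refine ⟨log 2 / 18, by positivity, fun N => ?_⟩
  set d := N + 1
  set m := ⌈16 * (d : ℝ) ^ (2 * a + 1)⌉₊
  have hd : (1 : ℝ) ≤ d := by simp [d]
  have hdp : (d : ℝ) ^ (2 * a + 1) * ((d : ℝ) ^ (-a)) ^ 2 = d := by
    rw [← rpow_natCast, ← rpow_mul (by positivity), ← rpow_add (by positivity)]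
    convert rpow_one (d : ℝ) using 2
    push_cast
    ring
  have hm : 16 * (d : ℝ) ^ (2 * a + 1) ≤ m := Nat.le_ceil _
  obtain ⟨F, hF, hvc, hip, hcard⟩ := exists_lowCorrelation_family d m (q := (d : ℝ) ^ (-a))
    (by omega) (by positivity) (rpow_le_one_of_one_le_of_nonpos hd (by linarith)) (calc
      16 * (d : ℝ) = 16 * (d : ℝ) ^ (2 * a + 1) * ((d : ℝ) ^ (-a)) ^ 2 := by rw [mul_assoc, hdp]
      _ ≤ m * ((d : ℝ) ^ (-a)) ^ 2 := by gcongr)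
  refine ⟨d + m, by omega, F, d, hF, hvc, hip, ?_⟩
  have hn : ((d + m : ℕ) : ℝ) ≤ 18 * (d : ℝ) ^ (2 * a + 1) := by
    have := Nat.ceil_lt_add_one (by positivity : (0 : ℝ) ≤ 16 * (d : ℝ) ^ (2 * a + 1))
    have := self_le_rpow_of_one_le hd (by linarith : (1 : ℝ) ≤ 2 * a + 1)
    push_cast
    linarith
  have hroot := rpow_one_div_le_of_le_mul_rpow (by positivity) (by norm_num) (by positivity)
    (by linarith) hn
  rw [hcard, Nat.cast_pow, Nat.cast_ofNat, ← exp_log (two_pos (α := ℝ)), ← exp_nat_mul,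
    exp_log two_pos]
  exact exp_le_exp.2 (by nlinarith [log_pos one_lt_two])
end

section
/- For all integers n and d with 1 ≤ d ≤ n/2, one has Σ_{i=0}^{d} C(n,i) < 0.98 · 2^{n·H(d/n)}. -/
open Finset

/-!
Put `p = d / n`. Then `2 ^ (n H(p)) = (p ^ d (1 - p) ^ (n - d))⁻¹`, and as `p ≤ 1 - p`, each
`C(n,i) p ^ d (1 - p) ^ (n - d)` with `i ≤ d` is at most the binomial probability
`C(n,i) p ^ i (1 - p) ^ (n - i)`. So it suffices that `X ~ Bin(n, p)`, which has mean `d` and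
variance `v = d (1 - p) ≥ 1/2`, satisfies `P(X > d) ≥ 9/400 > 1/50`.

De Moivre's identity `E[(X - d)⁺] = v P(X = d)` and Cauchy–Schwarz give `P(X > d) ≥ v P(X = d)²`.
As `d` is a mode, Chebyshev's inequality for the window `|X - d| ≤ 2√v`, which contains at most
`5√v` integers, gives `√v P(X = d) ≥ 3/20`.
-/

/-- Binary entropy function (base 2). -/
noncomputable def binH (x : ℝ) : ℝ := -x * Real.logb 2 x - (1 - x) * Real.logb 2 (1 - x)

lemma two_rpow_mul_binH {p : ℝ} (hp0 : 0 < p) (hp1 : p < 1) {n k : ℕ} (hkn : k ≤ n)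
    (hk : (k : ℝ) = n * p) :
    (2 : ℝ) ^ ((n : ℝ) * binH p) = (p ^ k * (1 - p) ^ (n - k))⁻¹ := by
  have hq : 0 < 1 - p := sub_pos.2 hp1
  have hlog : (n : ℝ) * binH p = Real.logb 2 (p ^ k * (1 - p) ^ (n - k))⁻¹ := by
    rw [Real.logb_inv, Real.logb_mul (by positivity) (by positivity), Real.logb_pow,
      Real.logb_pow, Nat.cast_sub hkn, hk, binH]
    ring
  rw [hlog, Real.rpow_logb (by norm_num) (by norm_num) (by positivity)]

lemma card_filter_abs_sub_natCast_le (s : Finset ℕ) (k : ℕ) (r : ℝ) :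
    #(s.filter fun i : ℕ => |(i : ℝ) - k| ≤ r) ≤ 2 * ⌊r⌋₊ + 1 := by
  have hsub : s.filter (fun i : ℕ => |(i : ℝ) - k| ≤ r) ⊆ Icc (k - ⌊r⌋₊) (k + ⌊r⌋₊) := by
    intro i hi
    obtain ⟨hlo, hhi⟩ := abs_le.1 (mem_filter.1 hi).2
    have hr : 0 ≤ r := by linarith
    have h1 : k - i ≤ ⌊r⌋₊ := Nat.le_floor <| by
      rcases le_total i k with h | h
      · rw [Nat.cast_sub h]; linarith
      · rw [Nat.sub_eq_zero_of_le h, Nat.cast_zero]; exact hr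
    have h2 : i - k ≤ ⌊r⌋₊ := Nat.le_floor <| by
      rcases le_total k i with h | h
      · rw [Nat.cast_sub h]; linarith
      · rw [Nat.sub_eq_zero_of_le h, Nat.cast_zero]; exact hr
    rw [mem_Icc]; omega
  calc #(s.filter fun i : ℕ => |(i : ℝ) - k| ≤ r) ≤ #(Icc (k - ⌊r⌋₊) (k + ⌊r⌋₊)) :=
        card_le_card hsub
    _ ≤ 2 * ⌊r⌋₊ + 1 := by rw [Nat.card_Icc]; omega

lemma two_mul_floor_two_mul_add_one_le {s : ℝ} (hs : 3 / 5 ≤ s) :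
    (2 * ⌊2 * s⌋₊ + 1 : ℝ) ≤ 5 * s := by
  have hle : (⌊2 * s⌋₊ : ℝ) ≤ 2 * s := Nat.floor_le (by linarith)
  have hone : 1 ≤ ⌊2 * s⌋₊ := Nat.le_floor (by push_cast; linarith)
  rcases hone.eq_or_lt with h | h
  · rw [← h]; push_cast; linarith
  · have : (2 : ℝ) ≤ ⌊2 * s⌋₊ := by exact_mod_cast h
    linarith

/-- `P(X = i)` for `X ~ Bin(n, p)`. -/
noncomputable def binomWeight (n : ℕ) (p : ℝ) (i : ℕ) : ℝ :=
  n.choose i * p ^ i * (1 - p) ^ (n - i)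

namespace binomWeight

variable {n : ℕ} {p : ℝ}

lemma nonneg (hp0 : 0 ≤ p) (hp1 : p ≤ 1) (i : ℕ) : 0 ≤ binomWeight n p i := by
  have : 0 ≤ 1 - p := sub_nonneg.2 hp1
  unfold binomWeight; positivity

lemma eval_bernsteinPolynomial (i : ℕ) :
    (bernsteinPolynomial ℝ n i).eval p = binomWeight n p i := by
  simp [bernsteinPolynomial, binomWeight]

variable (n p)

lemma sum_range : ∑ i ∈ range (n + 1), binomWeight n p i = 1 := by
  simpa [Polynomial.eval_finsetSum, eval_bernsteinPolynomial] using
    congrArg (Polynomial.eval p) (bernsteinPolynomial.sum ℝ n)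

lemma sum_range_sq_sub_mul :
    ∑ i ∈ range (n + 1), ((i : ℝ) - n * p) ^ 2 * binomWeight n p i = n * p * (1 - p) := by
  have h := congrArg (Polynomial.eval p) (bernsteinPolynomial.variance ℝ n)
  simp only [Polynomial.eval_finsetSum, Polynomial.eval_mul, Polynomial.eval_pow,
    Polynomial.eval_sub, Polynomial.eval_natCast, Polynomial.eval_X,
    Polynomial.eval_one, nsmul_eq_mul, eval_bernsteinPolynomial] at h
  rw [← h]
  exact sum_congr rfl fun i _ => by ring

lemma succ_right_eq {k : ℕ} (hk : k < n) :
    (k + 1) * (1 - p) * binomWeight n p (k + 1) = (n - k) * p * binomWeight n p k := by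
  have hc : (n.choose (k + 1) : ℝ) * (k + 1) = n.choose k * (n - k) := by
    have := congrArg (Nat.cast (R := ℝ)) (Nat.choose_succ_right_eq n k)
    push_cast [Nat.cast_sub hk.le] at this
    exact this
  have hq : n - k = n - (k + 1) + 1 := by omega
  unfold binomWeight
  rw [hq, pow_succ, pow_succ]
  linear_combination (p ^ k * p * (1 - p) ^ (n - (k + 1)) * (1 - p)) * hc

lemma sum_Ico_sub_mul {k : ℕ} (hk : k ≤ n) :
    ∑ i ∈ Ico k (n + 1), ((i : ℝ) - n * p) * binomWeight n p i
      = k * (1 - p) * binomWeight n p k := by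
  induction hk using Nat.decreasingInduction with
  | self => simp only [Nat.Ico_succ_singleton, sum_singleton]; ring
  | of_succ k hk ih =>
    rw [sum_eq_sum_Ico_succ_bot (by omega), ih, Nat.cast_add_one, succ_right_eq n p hk]
    ring

variable {n p}

lemma le_succ (hp1 : p < 1) {i : ℕ} (hi : (i + 1 : ℝ) ≤ (n + 1) * p) :
    binomWeight n p i ≤ binomWeight n p (i + 1) := by
  have hp0 : 0 ≤ p := by nlinarith
  have hin : i < n := by
    have : (i : ℝ) < n := by nlinarith
    exact_mod_cast this
  have hw : 0 ≤ binomWeight n p i := nonneg hp0 hp1.le i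
  have hpos : 0 < (i + 1) * (1 - p) := by nlinarith
  refine le_of_mul_le_mul_left ?_ hpos
  rw [succ_right_eq n p hin]
  exact mul_le_mul_of_nonneg_right (by nlinarith) hw

lemma succ_le (hp0 : 0 ≤ p) (hp1 : p ≤ 1) {i : ℕ} (hi : (n + 1) * p ≤ i + 1) :
    binomWeight n p (i + 1) ≤ binomWeight n p i := by
  rcases lt_or_ge i n with hin | hni
  · have hin' : (i : ℝ) + 1 ≤ n := by exact_mod_cast hin
    have hpos : 0 < (i + 1) * (1 - p) := by nlinarith
    refine le_of_mul_le_mul_left ?_ hpos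
    rw [succ_right_eq n p hin]
    exact mul_le_mul_of_nonneg_right (by nlinarith) (nonneg hp0 hp1 i)
  · simp only [binomWeight, Nat.choose_eq_zero_of_lt (Nat.lt_succ_of_le hni), Nat.cast_zero,
      zero_mul]
    exact nonneg hp0 hp1 i

lemma le_of_natCast_eq_mul (hp0 : 0 ≤ p) (hp1 : p < 1) {k : ℕ} (hk : (k : ℝ) = n * p) (i : ℕ) :
    binomWeight n p i ≤ binomWeight n p k := by
  rcases le_total i k with hik | hki
  · refine monotoneOn_of_le_add_one (f := binomWeight n p) Set.ordConnected_Iic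
      (fun a _ _ ha => le_succ hp1 ?_) hik (Set.mem_Iic.2 le_rfl) hik
    have : ((a + 1 : ℕ) : ℝ) ≤ k := by exact_mod_cast ha
    push_cast at this; nlinarith
  · refine antitoneOn_of_add_one_le (f := binomWeight n p) Set.ordConnected_Ici
      (fun a _ ha _ => succ_le hp0 hp1.le ?_) (Set.mem_Ici.2 le_rfl) hki hki
    have : (k : ℝ) ≤ a := by exact_mod_cast ha
    nlinarith

lemma sum_filter_lt_abs_sub_le (hp0 : 0 ≤ p) (hp1 : p ≤ 1) {r : ℝ} (hr : 0 < r) :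
    ∑ i ∈ (range (n + 1)).filter (fun i : ℕ => r < |(i : ℝ) - n * p|), binomWeight n p i
      ≤ n * p * (1 - p) / r ^ 2 := by
  calc ∑ i ∈ (range (n + 1)).filter (fun i : ℕ => r < |(i : ℝ) - n * p|), binomWeight n p i
      ≤ ∑ i ∈ (range (n + 1)).filter (fun i : ℕ => r < |(i : ℝ) - n * p|),
          ((i - n * p) ^ 2 / r ^ 2) * binomWeight n p i := by
        refine sum_le_sum fun i hi => le_mul_of_one_le_left (nonneg hp0 hp1 i) ?_
        rw [one_le_div (by positivity), ← sq_abs ((i : ℝ) - n * p)]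
        exact pow_le_pow_left₀ hr.le (mem_filter.1 hi).2.le 2
    _ ≤ ∑ i ∈ range (n + 1), ((i - n * p) ^ 2 / r ^ 2) * binomWeight n p i :=
        sum_le_sum_of_subset_of_nonneg (filter_subset _ _) fun i _ _ =>
          mul_nonneg (by positivity) (nonneg hp0 hp1 i)
    _ = n * p * (1 - p) / r ^ 2 := by
        simp_rw [div_mul_eq_mul_div, ← sum_div, sum_range_sq_sub_mul]

lemma one_le_floor_mul_add_div_sq (hp0 : 0 ≤ p) (hp1 : p < 1) {k : ℕ} (hk : (k : ℝ) = n * p)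
    {r : ℝ} (hr : 0 < r) :
    1 ≤ (2 * ⌊r⌋₊ + 1) * binomWeight n p k + n * p * (1 - p) / r ^ 2 := by
  set near := (range (n + 1)).filter fun i : ℕ => |(i : ℝ) - k| ≤ r
  have hnear : ∑ i ∈ near, binomWeight n p i ≤ (2 * ⌊r⌋₊ + 1) * binomWeight n p k :=
    calc ∑ i ∈ near, binomWeight n p i ≤ #near • binomWeight n p k :=
          sum_le_card_nsmul _ _ _ fun i _ => le_of_natCast_eq_mul hp0 hp1 hk i
      _ ≤ (2 * ⌊r⌋₊ + 1) * binomWeight n p k := by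
          rw [nsmul_eq_mul]
          refine mul_le_mul_of_nonneg_right ?_ (nonneg hp0 hp1.le k)
          calc (#near : ℝ) ≤ ((2 * ⌊r⌋₊ + 1 : ℕ) : ℝ) :=
                Nat.cast_le.2 (card_filter_abs_sub_natCast_le _ k r)
            _ = 2 * ⌊r⌋₊ + 1 := by push_cast; ring
  have hfar : ∑ i ∈ (range (n + 1)).filter (fun i : ℕ => ¬ |(i : ℝ) - k| ≤ r), binomWeight n p i
      ≤ n * p * (1 - p) / r ^ 2 := by
    simpa only [not_le, hk] using sum_filter_lt_abs_sub_le hp0 hp1.le hr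
  calc 1 = ∑ i ∈ range (n + 1), binomWeight n p i := (sum_range n p).symm
    _ = _ := (sum_filter_add_sum_filter_not _ (fun i : ℕ => |(i : ℝ) - k| ≤ r) _).symm
    _ ≤ _ := add_le_add hnear hfar

lemma mul_sq_le_sum_Ico (hp0 : 0 ≤ p) (hp1 : p ≤ 1) {k : ℕ} (hk : (k : ℝ) = n * p) :
    n * p * (1 - p) * binomWeight n p k ^ 2 ≤ ∑ i ∈ Ico (k + 1) (n + 1), binomWeight n p i := by
  set v := (n : ℝ) * p * (1 - p)
  set T := ∑ i ∈ Ico (k + 1) (n + 1), binomWeight n p i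
  have hkn : k ≤ n := by
    have : (k : ℝ) ≤ n := by rw [hk]; nlinarith
    exact_mod_cast this
  have hw : ∀ i, 0 ≤ binomWeight n p i := nonneg hp0 hp1
  have hmean : ∑ i ∈ Ico (k + 1) (n + 1), ((i : ℝ) - k) * binomWeight n p i
      = v * binomWeight n p k := by
    have h := sum_Ico_sub_mul n p hkn
    rw [sum_eq_sum_Ico_succ_bot (by omega), ← hk, sub_self, zero_mul, zero_add] at h
    rw [h, hk]
  have hvar : ∑ i ∈ Ico (k + 1) (n + 1), ((i : ℝ) - k) ^ 2 * binomWeight n p i ≤ v := by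
    calc _ ≤ ∑ i ∈ range (n + 1), ((i : ℝ) - k) ^ 2 * binomWeight n p i :=
          sum_le_sum_of_subset_of_nonneg
            (fun i hi => by simp only [mem_Ico, mem_range] at hi ⊢; omega)
            fun i _ _ => mul_nonneg (sq_nonneg _) (hw i)
      _ = v := by rw [hk]; exact sum_range_sq_sub_mul n p
  have hCS : (v * binomWeight n p k) ^ 2 ≤ v * T := by
    rw [← hmean]
    refine (sum_sq_le_sum_mul_sum_of_sq_le_mul _
      (f := fun i : ℕ => ((i : ℝ) - k) ^ 2 * binomWeight n p i)
      (fun i _ => mul_nonneg (sq_nonneg _) (hw i))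
      (fun i _ => hw i) fun i _ => le_of_eq (by ring)).trans ?_
    exact mul_le_mul_of_nonneg_right hvar (sum_nonneg fun i _ => hw i)
  have hv : 0 ≤ v := mul_nonneg (mul_nonneg n.cast_nonneg hp0) (sub_nonneg.2 hp1)
  rcases hv.eq_or_lt with h0 | hpos
  · rw [← h0, zero_mul]; exact sum_nonneg fun i _ => hw i
  · nlinarith

lemma le_sum_Ico (hp0 : 0 ≤ p) (hp1 : p < 1) {k : ℕ} (hk : (k : ℝ) = n * p)
    (hv : 1 / 2 ≤ n * p * (1 - p)) :
    9 / 400 ≤ ∑ i ∈ Ico (k + 1) (n + 1), binomWeight n p i := by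
  set s := √(n * p * (1 - p))
  have hs2 : s ^ 2 = n * p * (1 - p) := Real.sq_sqrt (by linarith)
  have hs : 3 / 5 ≤ s := by nlinarith [Real.sqrt_nonneg (n * p * (1 - p))]
  have hwin := one_le_floor_mul_add_div_sq hp0 hp1 hk (r := 2 * s) (by linarith)
  rw [mul_pow, hs2, div_mul_cancel_right₀ (by linarith)] at hwin
  have hm : 0 ≤ binomWeight n p k := nonneg hp0 hp1.le k
  have hsm : 3 / 20 ≤ s * binomWeight n p k := by
    nlinarith [two_mul_floor_two_mul_add_one_le hs]
  calc (9 / 400 : ℝ) ≤ (s * binomWeight n p k) ^ 2 := by nlinarith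
    _ = n * p * (1 - p) * binomWeight n p k ^ 2 := by rw [mul_pow, hs2]
    _ ≤ _ := mul_sq_le_sum_Ico hp0 hp1.le hk

lemma sum_range_le (hp0 : 0 ≤ p) (hp1 : p < 1) {k : ℕ} (hk : (k : ℝ) = n * p)
    (hv : 1 / 2 ≤ n * p * (1 - p)) :
    ∑ i ∈ range (k + 1), binomWeight n p i ≤ 391 / 400 := by
  have hkn : k + 1 ≤ n + 1 := by
    have : (k : ℝ) ≤ n := by rw [hk]; nlinarith
    exact_mod_cast Nat.succ_le_succ (by exact_mod_cast this : k ≤ n)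
  have h := sum_range_add_sum_Ico (binomWeight n p) hkn
  rw [sum_range] at h
  linarith [le_sum_Ico hp0 hp1 hk hv]

lemma sum_range_choose_mul_le (hp0 : 0 ≤ p) (hpq : p ≤ 1 - p) {k : ℕ} (hkn : k ≤ n) :
    (∑ i ∈ range (k + 1), (n.choose i : ℝ)) * (p ^ k * (1 - p) ^ (n - k))
      ≤ ∑ i ∈ range (k + 1), binomWeight n p i := by
  rw [sum_mul]
  refine sum_le_sum fun i hi => ?_
  have hik : i ≤ k := Nat.lt_succ_iff.1 (mem_range.1 hi)
  have hq : 0 ≤ 1 - p := hp0.trans hpq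
  calc (n.choose i : ℝ) * (p ^ k * (1 - p) ^ (n - k))
      = n.choose i * p ^ i * (p ^ (k - i) * (1 - p) ^ (n - k)) := by
        rw [mul_assoc, ← mul_assoc (p ^ i), ← pow_add, Nat.add_sub_cancel' hik]
    _ ≤ n.choose i * p ^ i * ((1 - p) ^ (k - i) * (1 - p) ^ (n - k)) := by gcongr
    _ = binomWeight n p i := by
        rw [binomWeight, ← pow_add]; congr 2; omega

end binomWeight

/-- For `1 ≤ d ≤ n/2`, `Σ_{i=0}^d C(n,i) < 0.98 · 2^(n·H(d/n))`. -/
theorem stmt5 (n d : ℕ) (hd1 : 1 ≤ d) (hd2 : (d : ℝ) ≤ (n : ℝ) / 2) :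
    (∑ i ∈ Finset.range (d + 1), (n.choose i : ℝ))
      < 0.98 * (2 : ℝ) ^ ((n : ℝ) * binH ((d : ℝ) / (n : ℝ))) := by
  have hd : (1 : ℝ) ≤ d := by exact_mod_cast hd1
  have hn : (0 : ℝ) < n := by linarith
  set p := (d : ℝ) / n
  have hdp : (d : ℝ) = n * p := (mul_div_cancel₀ _ hn.ne').symm
  have hp0 : 0 < p := by positivity
  have hp : p ≤ 1 / 2 := by rw [div_le_iff₀ hn]; linarith
  have hdn : d ≤ n := by exact_mod_cast (show (d : ℝ) ≤ n by linarith)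
  have hv : 1 / 2 ≤ n * p * (1 - p) := by rw [← hdp]; nlinarith
  have hq : 0 < 1 - p := by linarith
  rw [two_rpow_mul_binH hp0 (by linarith) hdn hdp, ← div_eq_mul_inv, lt_div_iff₀ (by positivity)]
  calc (∑ i ∈ range (d + 1), (n.choose i : ℝ)) * (p ^ d * (1 - p) ^ (n - d))
      ≤ ∑ i ∈ range (d + 1), binomWeight n p i :=
        binomWeight.sum_range_choose_mul_le hp0.le (by linarith) hdn
    _ ≤ 391 / 400 := binomWeight.sum_range_le hp0.le (by linarith) hdp hv
    _ < 0.98 := by norm_num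
end

section
/- For every integer k ≥ 2 and all integers n and d with n ≥ 6 and 2 ≤ d ≤ n·k/(k+1.6), one has Σ_{i=0}^{d} C(n,i)·k^i < 0.94 · 2^{n·H(d/n) + d·log₂ k}. -/
open Finset

open Stirling Filter Real in
lemma my_sqrtpi_le_stirlingSeq (j : ℕ) : Real.sqrt π ≤ stirlingSeq (j+1) :=
  Stirling.stirlingSeq'_antitone.le_of_tendsto
    (tendsto_stirlingSeq_sqrt_pi.comp (tendsto_add_atTop_nat 1)) j

open Stirling Real in
lemma my_stirlingSeq_le (j : ℕ) : stirlingSeq (j+1) ≤ Real.exp 1 / Real.sqrt 2 := by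
  have := Stirling.stirlingSeq'_antitone (Nat.zero_le j)
  simpa [Stirling.stirlingSeq_one] using this

lemma my_denom_pos (j : ℕ) (hj : 1 ≤ j) :
    0 < Real.sqrt (2*j) * ((j:ℝ)/Real.exp 1)^j := by
  have hj' : (0:ℝ) < j := by exact_mod_cast hj
  positivity

open Real in
lemma my_fact_lb (j : ℕ) (hj : 1 ≤ j) :
    Real.sqrt π * (Real.sqrt (2*j) * ((j:ℝ)/Real.exp 1)^j) ≤ j.factorial := by
  obtain ⟨i, rfl⟩ : ∃ i, j = i + 1 := ⟨j - 1, by omega⟩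
  have h := my_sqrtpi_le_stirlingSeq i
  rw [Stirling.stirlingSeq] at h
  have hd := my_denom_pos (i+1) (by omega)
  rw [le_div_iff₀ hd] at h
  exact h

open Real in
lemma my_fact_ub (j : ℕ) (hj : 1 ≤ j) :
    (j.factorial : ℝ) ≤ (Real.exp 1 / Real.sqrt 2) * (Real.sqrt (2*j) * ((j:ℝ)/Real.exp 1)^j) := by
  obtain ⟨i, rfl⟩ : ∃ i, j = i + 1 := ⟨j - 1, by omega⟩
  have h := my_stirlingSeq_le i
  rw [Stirling.stirlingSeq] at h
  have hd := my_denom_pos (i+1) (by omega)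
  rw [div_le_iff₀ hd] at h
  exact h

open Real in
/-- entropy identity : `2^(n·H(d/n)) = n^n / (d^d m^m)` for `n = d + m`. -/
lemma my_entropy_eq (n d m : ℕ) (hd : 1 ≤ d) (hm : 1 ≤ m) (hnm : n = d + m) :
    (2:ℝ) ^ ((n:ℝ) * binH ((d:ℝ)/(n:ℝ))) = (n:ℝ)^n / ((d:ℝ)^d * (m:ℝ)^m) := by
  have hD : (0:ℝ) < d := by exact_mod_cast hd
  have hM : (0:ℝ) < m := by exact_mod_cast hm
  have hNc : (n:ℝ) = (d:ℝ) + (m:ℝ) := by exact_mod_cast congrArg (Nat.cast : ℕ → ℝ) hnm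
  have hN : (0:ℝ) < n := by rw [hNc]; linarith
  have h1 : 1 - (d:ℝ)/(n:ℝ) = (m:ℝ)/(n:ℝ) := by field_simp; linarith [hNc]
  have h2 : (n:ℝ) * binH ((d:ℝ)/(n:ℝ))
      = (d:ℝ) * Real.logb 2 ((n:ℝ)/(d:ℝ)) + (m:ℝ) * Real.logb 2 ((n:ℝ)/(m:ℝ)) := by
    rw [binH, h1]
    have hld : Real.logb 2 ((d:ℝ)/(n:ℝ)) = - Real.logb 2 ((n:ℝ)/(d:ℝ)) := by
      rw [← Real.logb_inv]; congr 1; field_simp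
    have hlm : Real.logb 2 ((m:ℝ)/(n:ℝ)) = - Real.logb 2 ((n:ℝ)/(m:ℝ)) := by
      rw [← Real.logb_inv]; congr 1; field_simp
    rw [hld, hlm]; field_simp; try ring
  rw [h2, Real.rpow_add two_pos]
  have hrd : (2:ℝ) ^ ((d:ℝ) * Real.logb 2 ((n:ℝ)/(d:ℝ))) = ((n:ℝ)/(d:ℝ))^d := by
    rw [mul_comm, Real.rpow_mul (by norm_num : (0:ℝ) ≤ 2),
      Real.rpow_logb two_pos (by norm_num) (by positivity), Real.rpow_natCast]
  have hrm : (2:ℝ) ^ ((m:ℝ) * Real.logb 2 ((n:ℝ)/(m:ℝ))) = ((n:ℝ)/(m:ℝ))^m := by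
    rw [mul_comm, Real.rpow_mul (by norm_num : (0:ℝ) ≤ 2),
      Real.rpow_logb two_pos (by norm_num) (by positivity), Real.rpow_natCast]
  rw [hrd, hrm, div_pow, div_pow, div_mul_div_comm, ← pow_add, ← hnm]

open Real in
lemma my_rpow_logb (K : ℝ) (hK : 0 < K) (d : ℕ) :
    (2:ℝ) ^ ((d:ℝ) * Real.logb 2 K) = K ^ d := by
  rw [mul_comm, Real.rpow_mul (by norm_num : (0:ℝ) ≤ 2),
    Real.rpow_logb two_pos (by norm_num) hK, Real.rpow_natCast]

lemma my_num (D M N u e p : ℝ) (hD2 : 2 ≤ D) (hM1 : 1 ≤ M) (hNc : N = D + M)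
    (hu : 0.6*M + 1.6 ≤ 1.6*(M+1)*u) (hu0 : 0 < u)
    (he2 : e^2 < 7.3890561) (hp2 : 9.8696 < p^2) :
    e^2 * N < 0.8836 * u^2 * (p^2 * ((2*D) * (2*M))) := by
  have hN0 : 0 < N := by nlinarith
  have p1 : (0.6*M+1.6)^2 ≤ (1.6*(M+1))^2 * u^2 := by
    nlinarith [mul_self_le_mul_self (show (0:ℝ) ≤ 0.6*M+1.6 by linarith) hu]
  have q2 : 9.8696 * ((0.6*M+1.6)^2) ≤ p^2 * ((1.6*(M+1))^2 * u^2) :=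
    mul_le_mul hp2.le p1 (sq_nonneg _) (by positivity)
  have q3 : e^2 * N * (2.56*(M+1)^2) ≤ 7.3890561 * N * (2.56*(M+1)^2) := by
    have h := mul_le_mul_of_nonneg_right he2.le hN0.le
    nlinarith [h, sq_nonneg (M+1)]
  have q4 : 7.3890561 * N * (2.56*(M+1)^2)
      < 0.8836 * (2*D*(2*M)) * (9.8696 * ((0.6*M+1.6)^2)) := by
    subst hNc
    nlinarith [mul_nonneg (sub_nonneg.2 hD2) (sq_nonneg (M-1)),
      mul_nonneg (sub_nonneg.2 hD2) (sq_nonneg (M+1)),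
      mul_nonneg (sub_nonneg.2 hD2) (sub_nonneg.2 hM1),
      sq_nonneg (M-1), sq_nonneg (M+1)]
  have q5 : 0.8836 * (2*D*(2*M)) * (9.8696 * ((0.6*M+1.6)^2))
      ≤ 0.8836 * (2*D*(2*M)) * (p^2 * ((1.6*(M+1))^2 * u^2)) :=
    mul_le_mul_of_nonneg_left q2 (by positivity)
  have chain : e^2 * N * (2.56*(M+1)^2)
      < (0.8836 * u^2 * (p^2 * ((2*D) * (2*M)))) * (2.56*(M+1)^2) := by
    calc e^2 * N * (2.56*(M+1)^2) ≤ 7.3890561 * N * (2.56*(M+1)^2) := q3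
      _ < 0.8836 * (2*D*(2*M)) * (9.8696 * ((0.6*M+1.6)^2)) := q4
      _ ≤ 0.8836 * (2*D*(2*M)) * (p^2 * ((1.6*(M+1))^2 * u^2)) := q5
      _ = (0.8836 * u^2 * (p^2 * ((2*D) * (2*M)))) * (2.56*(M+1)^2) := by ring
  exact lt_of_mul_lt_mul_right chain (by positivity)

lemma my_e2 : (Real.exp 1)^2 < 7.3890561 := by
  nlinarith [Real.exp_one_lt_d9, Real.exp_pos 1]

lemma my_pi2 : (9.8696:ℝ) < Real.pi^2 := by
  nlinarith [Real.pi_gt_d6]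

set_option maxHeartbeats 2000000 in
open Real in
/-- For `k ≥ 2`, `n ≥ 6` and `2 ≤ d ≤ nk/(k+1.6)`,
`Σ_{i=0}^d C(n,i)·k^i < 0.94 · 2^(n·H(d/n) + d·log₂ k)`. -/
theorem stmt6 (k n d : ℕ) (hk : 2 ≤ k) (hn : 6 ≤ n) (hd1 : 2 ≤ d)
    (hd2 : (d : ℝ) ≤ (n : ℝ) * (k : ℝ) / ((k : ℝ) + 1.6)) :
    (∑ i ∈ Finset.range (d + 1), (n.choose i : ℝ) * (k : ℝ) ^ i)
      < 0.94 * (2 : ℝ) ^ ((n : ℝ) * binH ((d : ℝ) / (n : ℝ)) + (d : ℝ) * Real.logb 2 k) := by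
  have hK2 : (2:ℝ) ≤ (k:ℝ) := by exact_mod_cast hk
  have hK0 : (0:ℝ) < (k:ℝ) := by linarith
  have hD2 : (2:ℝ) ≤ (d:ℝ) := by exact_mod_cast hd1
  have hD0 : (0:ℝ) < (d:ℝ) := by linarith
  have hN6 : (6:ℝ) ≤ (n:ℝ) := by exact_mod_cast hn
  have hN0 : (0:ℝ) < (n:ℝ) := by linarith
  -- d < n
  have hd2' : (d:ℝ) * ((k:ℝ) + 1.6) ≤ (n:ℝ) * (k:ℝ) := by
    rw [div_eq_mul_inv] at hd2
    calc (d:ℝ) * ((k:ℝ) + 1.6) ≤ ((n:ℝ) * (k:ℝ) * ((k:ℝ) + 1.6)⁻¹) * ((k:ℝ) + 1.6) :=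
          mul_le_mul_of_nonneg_right hd2 (by linarith)
      _ = (n:ℝ) * (k:ℝ) := by field_simp
  have hdn : d < n := by
    by_contra h
    push_neg at h
    have : (n:ℝ) ≤ (d:ℝ) := by exact_mod_cast h
    nlinarith
  set m : ℕ := n - d with hmdef
  have hnm : n = d + m := by omega
  have hm1 : 1 ≤ m := by omega
  have hM1 : (1:ℝ) ≤ (m:ℝ) := by exact_mod_cast hm1
  have hM0 : (0:ℝ) < (m:ℝ) := by linarith
  have hNc : (n:ℝ) = (d:ℝ) + (m:ℝ) := by exact_mod_cast congrArg (Nat.cast : ℕ → ℝ) hnm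
  have h16 : 1.6 * (d:ℝ) ≤ (m:ℝ) * (k:ℝ) := by nlinarith
  -- the ratio r and u = 1 - r
  set r : ℝ := (d:ℝ) / ((k:ℝ) * ((m:ℝ) + 1)) with hrdef
  have hr0 : 0 ≤ r := by positivity
  set u : ℝ := 1 - r with hudef
  have hu : 0.6 * (m:ℝ) + 1.6 ≤ 1.6 * ((m:ℝ) + 1) * u := by
    have h1 : 1.6 * ((m:ℝ) + 1) * u = 1.6 * ((m:ℝ) + 1) - 1.6 * ((d:ℝ) / (k:ℝ)) := by
      rw [hudef, hrdef]; field_simp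
    have h2 : 1.6 * ((d:ℝ) / (k:ℝ)) ≤ (m:ℝ) := by
      rw [mul_div_assoc', div_le_iff₀ hK0]
      linarith
    rw [h1]; linarith
  have hu0 : 0 < u := by nlinarith [hu, hM0]
  have hr1 : r < 1 := by rw [hudef] at hu0; linarith
  -- geometric sum bound
  set f : ℕ → ℝ := fun i => (n.choose i : ℝ) * (k:ℝ) ^ i with hfdef
  have hstep : ∀ i : ℕ, i + 1 ≤ d → f i ≤ r * f (i+1) := by
    intro i hi
    have hnat : (m+1) * n.choose i ≤ d * n.choose (i+1) := by
      have hid : n.choose (i+1) * (i+1) = n.choose i * (n - i) :=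
        Nat.choose_succ_right_eq n i
      have hni : n - i = m + (d - i) := by omega
      have h1 : (m+1) * n.choose i * (i+1) ≤ d * (n.choose i * (n - i)) := by
        rw [hni]
        have c1 : 1 ≤ d - i := by omega
        calc (m+1) * n.choose i * (i+1) = (m * (i+1) + (i+1)) * n.choose i := by ring
          _ ≤ (m * d + d * (d - i)) * n.choose i := by
              apply Nat.mul_le_mul_right
              have t1 : m * (i+1) ≤ m * d := Nat.mul_le_mul_left m hi
              have t2 : d ≤ d * (d - i) := Nat.le_mul_of_pos_right d (by omega)
              omega
          _ = d * (n.choose i * (m + (d - i))) := by ring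
      rw [← hid] at h1
      have h2 : (m+1) * n.choose i * (i+1) ≤ d * n.choose (i+1) * (i+1) := by
        calc (m+1) * n.choose i * (i+1) ≤ d * (n.choose (i+1) * (i+1)) := h1
          _ = d * n.choose (i+1) * (i+1) := by ring
      exact Nat.le_of_mul_le_mul_right h2 (by omega)
    have hcast : ((m:ℝ) + 1) * (n.choose i : ℝ) ≤ (d:ℝ) * (n.choose (i+1) : ℝ) := by
      have := (Nat.cast_le (α := ℝ)).2 hnat
      push_cast at this
      linarith
    have hre : r * f (i+1) = (d:ℝ) * (n.choose (i+1) : ℝ) * (k:ℝ)^i / ((m:ℝ) + 1) := by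
      rw [hrdef, hfdef]
      simp only [pow_succ]
      field_simp
    rw [hre, le_div_iff₀ (by linarith : (0:ℝ) < (m:ℝ) + 1)]
    have h3 := mul_le_mul_of_nonneg_right hcast (pow_nonneg hK0.le i)
    simp only [hfdef]
    calc (n.choose i : ℝ) * (k:ℝ)^i * ((m:ℝ)+1)
        = ((m:ℝ)+1) * (n.choose i:ℝ) * (k:ℝ)^i := by ring
      _ ≤ (d:ℝ) * (n.choose (i+1):ℝ) * (k:ℝ)^i := by linarith [h3]
  have hclaim : ∀ j : ℕ, j ≤ d → f (d - j) ≤ r^j * f d := by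
    intro j
    induction j with
    | zero => intro _; simp
    | succ j ih =>
        intro hj
        have h1 : f (d - (j+1)) ≤ r * f (d - (j+1) + 1) := hstep _ (by omega)
        have h2 : d - (j+1) + 1 = d - j := by omega
        rw [h2] at h1
        calc f (d-(j+1)) ≤ r * f (d-j) := h1
          _ ≤ r * (r^j * f d) := mul_le_mul_of_nonneg_left (ih (by omega)) hr0
          _ = r^(j+1) * f d := by ring
  have hfd0 : 0 ≤ f d := by
    simp only [hfdef]; positivity
  have hgeo : ∑ j ∈ Finset.range (d+1), r^j ≤ 1/u := by
    have he : ∑ j ∈ Finset.range (d+1), r^j = (1 - r^(d+1))/u := by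
      rw [geom_sum_eq (ne_of_lt hr1), hudef]
      rw [div_eq_div_iff (sub_ne_zero.mpr (ne_of_lt hr1)) (sub_ne_zero.mpr (ne_of_gt hr1))]
      ring
    rw [he, div_le_div_iff₀ hu0 hu0]
    nlinarith [mul_nonneg (pow_nonneg hr0 (d+1)) hu0.le]
  have hsumle : (∑ i ∈ Finset.range (d + 1), (n.choose i : ℝ) * (k:ℝ) ^ i) ≤ (1/u) * f d := by
    have hrefl : ∑ j ∈ Finset.range (d+1), f (d - j) = ∑ i ∈ Finset.range (d+1), f i := by
      have h := Finset.sum_range_reflect f (d+1)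
      simp only [Nat.add_sub_cancel] at h
      exact h
    calc (∑ i ∈ Finset.range (d + 1), (n.choose i : ℝ) * (k:ℝ) ^ i)
        = ∑ j ∈ Finset.range (d+1), f (d - j) := hrefl.symm
      _ ≤ ∑ j ∈ Finset.range (d+1), r^j * f d := by
          apply Finset.sum_le_sum
          intro j hj
          exact hclaim j (Nat.lt_succ_iff.mp (Finset.mem_range.mp hj))
      _ = (∑ j ∈ Finset.range (d+1), r^j) * f d := by rw [Finset.sum_mul]
      _ ≤ (1/u) * f d := mul_le_mul_of_nonneg_right hgeo hfd0
  -- Stirling bound on the central binomial coefficient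
  have hfact : ((n.choose d : ℕ) : ℝ) * (d.factorial:ℝ) * (m.factorial:ℝ) = (n.factorial:ℝ) := by
    have h := Nat.choose_mul_factorial_mul_factorial (le_of_lt hdn)
    have hnd : n - d = m := by omega
    rw [hnd] at h
    exact_mod_cast h
  set e : ℝ := Real.exp 1 with hedef
  have he0 : 0 < e := Real.exp_pos 1
  set Ad : ℝ := Real.sqrt (2*(d:ℝ)) * ((d:ℝ)/e)^d with hAddef
  set Am : ℝ := Real.sqrt (2*(m:ℝ)) * ((m:ℝ)/e)^m with hAmdef
  set An : ℝ := Real.sqrt (2*(n:ℝ)) * ((n:ℝ)/e)^n with hAndef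
  have hAd0 : 0 < Ad := my_denom_pos d (by omega)
  have hAm0 : 0 < Am := my_denom_pos m hm1
  have hlbd : Real.sqrt π * Ad ≤ (d.factorial:ℝ) := my_fact_lb d (by omega)
  have hlbm : Real.sqrt π * Am ≤ (m.factorial:ℝ) := my_fact_lb m hm1
  have hubn : (n.factorial:ℝ) ≤ (e/Real.sqrt 2) * An := my_fact_ub n (by omega)
  have hC0 : (0:ℝ) ≤ (n.choose d : ℝ) := by positivity
  have hπ0 : (0:ℝ) < π := Real.pi_pos
  have hmain : (n.choose d : ℝ) * (Real.sqrt π * Ad) * (Real.sqrt π * Am)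
      ≤ (e/Real.sqrt 2) * An := by
    calc (n.choose d : ℝ) * (Real.sqrt π * Ad) * (Real.sqrt π * Am)
        ≤ (n.choose d : ℝ) * (d.factorial:ℝ) * (Real.sqrt π * Am) := by
          apply mul_le_mul_of_nonneg_right _ (by positivity)
          exact mul_le_mul_of_nonneg_left hlbd hC0
      _ ≤ (n.choose d : ℝ) * (d.factorial:ℝ) * (m.factorial:ℝ) := by
          apply mul_le_mul_of_nonneg_left hlbm (by positivity)
      _ = (n.factorial:ℝ) := hfact
      _ ≤ (e/Real.sqrt 2) * An := hubn
  have hCle : (n.choose d : ℝ) ≤ ((e/Real.sqrt 2) * An) / (π * (Ad * Am)) := by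
    rw [le_div_iff₀ (by positivity)]
    have hππ : Real.sqrt π * Real.sqrt π = π := Real.mul_self_sqrt hπ0.le
    calc (n.choose d:ℝ) * (π * (Ad*Am))
        = (n.choose d:ℝ) * (Real.sqrt π * Ad) * (Real.sqrt π * Am) := by
          conv_lhs => rw [← hππ]
          ring
      _ ≤ (e/Real.sqrt 2) * An := hmain
  set T : ℝ := (n:ℝ)^n / ((d:ℝ)^d * (m:ℝ)^m) with hTdef
  have hT0 : 0 < T := by positivity
  set cst : ℝ := (e/Real.sqrt 2) * Real.sqrt (2*(n:ℝ))
      / (π * (Real.sqrt (2*(d:ℝ)) * Real.sqrt (2*(m:ℝ)))) with hcstdef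
  have heq : ((e/Real.sqrt 2) * An) / (π * (Ad * Am)) = cst * T := by
    rw [hcstdef, hTdef, hAddef, hAmdef, hAndef]
    have hee : e^n = e^d * e^m := by rw [hnm, pow_add]
    rw [div_pow, div_pow, div_pow, hee]
    have hsd0 : (0:ℝ) < Real.sqrt (2*(d:ℝ)) := Real.sqrt_pos.mpr (by linarith)
    have hsm0 : (0:ℝ) < Real.sqrt (2*(m:ℝ)) := Real.sqrt_pos.mpr (by linarith)
    have hsn0 : (0:ℝ) < Real.sqrt (2*(n:ℝ)) := Real.sqrt_pos.mpr (by linarith)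
    have hs20 : (0:ℝ) < Real.sqrt 2 := Real.sqrt_pos.mpr (by norm_num)
    field_simp
  have hCT : (n.choose d : ℝ) ≤ cst * T := heq ▸ hCle
  -- numeric bound : cst < 0.94 * u
  have he2 : e^2 < 7.3890561 := by rw [hedef]; exact my_e2
  have hπ2 : (9.8696:ℝ) < π^2 := my_pi2
  have hkey2 : ((e/Real.sqrt 2) * Real.sqrt (2*(n:ℝ)))^2
      < (0.94 * u * (π * (Real.sqrt (2*(d:ℝ)) * Real.sqrt (2*(m:ℝ)))))^2 := by
    have hA : ((e/Real.sqrt 2) * Real.sqrt (2*(n:ℝ)))^2 = e^2 * (n:ℝ) := by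
      rw [mul_pow, div_pow, Real.sq_sqrt (by norm_num : (0:ℝ) ≤ 2),
        Real.sq_sqrt (by linarith : (0:ℝ) ≤ 2*(n:ℝ))]
      field_simp
    have hB : (0.94 * u * (π * (Real.sqrt (2*(d:ℝ)) * Real.sqrt (2*(m:ℝ)))))^2
        = 0.8836 * u^2 * (π^2 * ((2*(d:ℝ)) * (2*(m:ℝ)))) := by
      rw [mul_pow, mul_pow, mul_pow, mul_pow, Real.sq_sqrt (by linarith : (0:ℝ) ≤ 2*(d:ℝ)),
        Real.sq_sqrt (by linarith : (0:ℝ) ≤ 2*(m:ℝ))]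
      ring
    rw [hA, hB]
    have := my_num (d:ℝ) (m:ℝ) (n:ℝ) u e π hD2 hM1 hNc hu hu0 he2 hπ2
    linarith [this]
  have hcstu : cst < 0.94 * u := by
    have hABpos : (0:ℝ) ≤ 0.94 * u * (π * (Real.sqrt (2*(d:ℝ)) * Real.sqrt (2*(m:ℝ)))) := by
      positivity
    have hAB := lt_of_pow_lt_pow_left₀ 2 hABpos hkey2
    rw [hcstdef, div_lt_iff₀ (by positivity)]
    calc (e/Real.sqrt 2) * Real.sqrt (2*(n:ℝ))
        < 0.94 * u * (π * (Real.sqrt (2*(d:ℝ)) * Real.sqrt (2*(m:ℝ)))) := hAB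
      _ = 0.94 * u * (π * (Real.sqrt (2*(d:ℝ)) * Real.sqrt (2*(m:ℝ)))) := rfl
  -- assemble
  have hRHS : (2:ℝ) ^ ((n:ℝ) * binH ((d:ℝ)/(n:ℝ)) + (d:ℝ) * Real.logb 2 (k:ℝ))
      = T * (k:ℝ)^d := by
    rw [Real.rpow_add two_pos, my_entropy_eq n d m (by omega) hm1 hnm,
      my_rpow_logb (k:ℝ) hK0 d, hTdef]
  rw [hRHS]
  have hKd0 : (0:ℝ) < (k:ℝ)^d := pow_pos hK0 d
  calc (∑ i ∈ Finset.range (d + 1), (n.choose i : ℝ) * (k:ℝ) ^ i)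
      ≤ (1/u) * f d := hsumle
    _ ≤ (1/u) * ((cst*T) * (k:ℝ)^d) := by
        apply mul_le_mul_of_nonneg_left _ (by positivity)
        show (n.choose d : ℝ) * (k:ℝ)^d ≤ (cst*T) * (k:ℝ)^d
        exact mul_le_mul_of_nonneg_right hCT hKd0.le
    _ < (1/u) * ((0.94*u) * (T * (k:ℝ)^d)) := by
        apply mul_lt_mul_of_pos_left _ (by positivity)
        have h := mul_lt_mul_of_pos_right hcstu (mul_pos hT0 hKd0)
        calc cst*T*(k:ℝ)^d = cst * (T*(k:ℝ)^d) := by ring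
          _ < 0.94*u*(T*(k:ℝ)^d) := h
          _ = (0.94*u) * (T*(k:ℝ)^d) := rfl
    _ = 0.94 * (T * (k:ℝ)^d) := by
        field_simp
end

section
/- Let n ≥ 2, let F ⊆ {-1,1}^n be a set with |F| ≥ 2 and VC dimension d, and suppose every pair of distinct x, y ∈ F satisfies |⟨x,y⟩| ≤ γ for some γ ∈ [0,1). Then for every integer r with 2 ≤ r ≤ n, (Σ_{i=0}^{d} C(r,i))^{-1} < 1/|F| + ((1+γ)/2)^r. -/
open Finset

/-- Agreement set of two vectors. -/
def agrSet {n : ℕ} (x y : Fin n → ℤ) : Finset (Fin n) :=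
  Finset.univ.filter (fun i => x i = y i)

/-- Projection of a vector to a tuple of coordinates, encoded as the set of `+1` positions. -/
def projSet {n r : ℕ} (t : Fin r → Fin n) (x : Fin n → ℤ) : Finset (Fin r) :=
  Finset.univ.filter (fun j => x (t j) = 1)

lemma mem_projSet {n r : ℕ} (t : Fin r → Fin n) (x : Fin n → ℤ) (j : Fin r) :
    j ∈ projSet t x ↔ x (t j) = 1 := by simp [projSet]

/-- Sauer–Shelah bound on the cardinality of a projected family. -/
lemma image_projSet_card_le {n d r : ℕ} (F : Finset (Fin n → ℤ))
    (hpm : ∀ x ∈ F, ∀ i, x i = 1 ∨ x i = -1)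
    (hdvc : IsGreatest {k : ℕ | ∃ I : Finset (Fin n), I.card = k ∧ Shatters n F I} d)
    (t : Fin r → Fin n) :
    (F.image (projSet t)).card ≤ ∑ i ∈ Finset.range (d + 1), r.choose i := by
  set A : Finset (Finset (Fin r)) := F.image (projSet t) with hA
  have hvc : A.vcDim ≤ d := by
    apply Finset.sup_le
    intro s hs
    rw [Finset.mem_shatterer] at hs
    -- `t` is injective on `s`
    have hinj : Set.InjOn t s := by
      intro j1 hj1 j2 hj2 heq
      by_contra hne
      obtain ⟨u, hu, hsu⟩ := hs.exists_inter_eq_singleton (Finset.mem_coe.1 hj1)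
      obtain ⟨x, hxF, rfl⟩ := Finset.mem_image.1 hu
      have h1 : j1 ∈ s ∩ projSet t x := by rw [hsu]; exact Finset.mem_singleton_self _
      have h2 : j2 ∉ s ∩ projSet t x := by
        rw [hsu, Finset.mem_singleton]; exact fun h => hne h.symm
      have hx1 : x (t j1) = 1 := (mem_projSet t x j1).1 (Finset.mem_of_mem_inter_right h1)
      apply h2
      refine Finset.mem_inter.2 ⟨Finset.mem_coe.1 hj2, (mem_projSet t x j2).2 ?_⟩
      rw [← heq]; exact hx1
    apply hdvc.2
    refine ⟨s.image t, by rw [Finset.card_image_of_injOn hinj], ?_⟩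
    intro g hg
    obtain ⟨u, hu, hsu⟩ := hs (Finset.filter_subset (fun j => g (t j) = 1) s)
    obtain ⟨x, hxF, rfl⟩ := Finset.mem_image.1 hu
    refine ⟨x, hxF, ?_⟩
    intro i hi
    obtain ⟨j, hjs, rfl⟩ := Finset.mem_image.1 hi
    have hmem : j ∈ s ∩ projSet t x ↔ j ∈ s.filter (fun j => g (t j) = 1) := by rw [hsu]
    rcases hg _ hi with hg1 | hg1
    · have : j ∈ s ∩ projSet t x := hmem.2 (Finset.mem_filter.2 ⟨hjs, hg1⟩)
      rw [hg1]; exact (mem_projSet t x j).1 (Finset.mem_of_mem_inter_right this)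
    · have hnot : j ∉ s ∩ projSet t x := by
        rw [hmem, Finset.mem_filter]
        rintro ⟨-, h⟩; rw [hg1] at h; norm_num at h
      have : x (t j) ≠ 1 := fun h =>
        hnot (Finset.mem_inter.2 ⟨hjs, (mem_projSet t x j).2 h⟩)
      rcases hpm x hxF (t j) with h | h
      · exact absurd h this
      · rw [h, hg1]
  calc A.card ≤ A.shatterer.card := Finset.card_le_card_shatterer _
    _ ≤ ∑ k ∈ Finset.Iic A.vcDim, (Fintype.card (Fin r)).choose k :=
        Finset.card_shatterer_le_sum_vcDim
    _ ≤ ∑ i ∈ Finset.range (d + 1), r.choose i := by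
        rw [Fintype.card_fin]
        have h1 : Finset.Iic A.vcDim ⊆ Finset.range (d + 1) := by
          intro k hk
          rw [Finset.mem_range, Nat.lt_succ_iff]
          exact le_trans (Finset.mem_Iic.1 hk) hvc
        exact Finset.sum_le_sum_of_subset h1

/-- Cauchy–Schwarz on fibers: the number of colliding pairs is at least `|F|²/|image|`. -/
lemma collision_lb {α β : Type*} [DecidableEq β] (F : Finset α) (f : α → β) :
    F.card ^ 2 ≤ (F.image f).card *
      ∑ x ∈ F, ∑ y ∈ F, (if f x = f y then 1 else 0) := by
  classical
  set c : β → ℕ := fun u => (F.filter (fun x => f x = u)).card with hc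
  have hcard : F.card = ∑ u ∈ F.image f, c u := Finset.card_eq_sum_card_image f F
  have hsum : ∑ x ∈ F, ∑ y ∈ F, (if f x = f y then 1 else 0)
      = ∑ u ∈ F.image f, c u ^ 2 := by
    rw [← Finset.sum_fiberwise_of_maps_to (g := f) (fun x hx => Finset.mem_image_of_mem f hx)
      (fun x => ∑ y ∈ F, (if f x = f y then 1 else 0))]
    refine Finset.sum_congr rfl fun u hu => ?_
    have hinner : ∀ x ∈ F.filter (fun x => f x = u),
        (∑ y ∈ F, (if f x = f y then 1 else 0)) = c u := by
      intro x hx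
      have hfx : f x = u := (Finset.mem_filter.1 hx).2
      show _ = (F.filter (fun z => f z = u)).card
      rw [Finset.card_filter]
      refine Finset.sum_congr rfl fun y hy => ?_
      simp [hfx, eq_comm]
    rw [Finset.sum_congr rfl hinner, Finset.sum_const, smul_eq_mul, sq]
  rw [hcard, hsum]
  have h := sq_sum_le_card_mul_sum_sq (s := F.image f) (f := fun u => (c u : ℝ))
  have hcast : ((∑ u ∈ F.image f, c u : ℕ) : ℝ) ^ 2
      ≤ (((F.image f).card * ∑ u ∈ F.image f, c u ^ 2 : ℕ) : ℝ) := by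
    push_cast
    exact h
  exact_mod_cast hcast

/-- Counting tuples landing inside a set. -/
lemma tuple_count {n : ℕ} (r : ℕ) (A : Finset (Fin n)) :
    ∑ t : Fin r → Fin n, (if ∀ j, t j ∈ A then 1 else 0) = A.card ^ r := by
  classical
  rw [← Finset.card_filter]
  have : Finset.univ.filter (fun t : Fin r → Fin n => ∀ j, t j ∈ A)
      = Fintype.piFinset (fun _ : Fin r => A) := by
    ext t; simp [Fintype.mem_piFinset]
  rw [this, Fintype.card_piFinset]
  simp

/-- The key projection inequality: if `F ⊆ {-1,1}^n` has `|F| ≥ 2`, VC dimension `d`, and all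
distinct pairs satisfy `|⟨x,y⟩| ≤ γ` with `γ ∈ [0,1)`, then for every integer `2 ≤ r ≤ n`,
`(Σ_{i=0}^d C(r,i))⁻¹ < 1/|F| + ((1+γ)/2)^r`. -/
theorem stmt8 (n d : ℕ) (hn : 2 ≤ n) (F : Finset (Fin n → ℤ))
    (hpm : ∀ x ∈ F, ∀ i, x i = 1 ∨ x i = -1)
    (hcard : 2 ≤ F.card)
    (hdvc : IsGreatest {k : ℕ | ∃ I : Finset (Fin n), I.card = k ∧ Shatters n F I} d)
    (γ : ℝ) (hγ0 : 0 ≤ γ) (hγ1 : γ < 1)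
    (horth : ∀ x ∈ F, ∀ y ∈ F, x ≠ y → |ipNorm n x y| ≤ γ)
    (r : ℕ) (hr2 : 2 ≤ r) (hrn : r ≤ n) :
    (∑ i ∈ Finset.range (d + 1), (r.choose i : ℝ))⁻¹
      < 1 / (F.card : ℝ) + ((1 + γ) / 2) ^ r := by
  classical
  set B : ℕ := ∑ i ∈ Finset.range (d + 1), r.choose i with hB
  have hn0 : 0 < n := lt_of_lt_of_le two_pos hn
  -- agreement set cardinality bound for distinct pairs
  have hagr : ∀ x ∈ F, ∀ y ∈ F, x ≠ y →
      ((agrSet x y).card : ℝ) ≤ n * ((1 + γ) / 2) := by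
    intro x hx y hy hxy
    have hsum : (∑ i, x i * y i) = 2 * ((agrSet x y).card : ℤ) - n := by
      set Ac : Finset (Fin n) := Finset.univ.filter (fun i => ¬ x i = y i) with hAc
      have hcards : (agrSet x y).card + Ac.card = n := by
        have := Finset.card_filter_add_card_filter_not
          (s := (Finset.univ : Finset (Fin n))) (p := fun i => x i = y i)
        simpa [agrSet, hAc] using this
      have hsplit : (∑ i, x i * y i)
          = ∑ i ∈ agrSet x y, x i * y i + ∑ i ∈ Ac, x i * y i :=
        (Finset.sum_filter_add_sum_filter_not Finset.univ (fun i => x i = y i) _).symm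
      have h1 : ∑ i ∈ agrSet x y, x i * y i = ((agrSet x y).card : ℤ) := by
        rw [Finset.sum_congr rfl (fun i hi => ?_), Finset.sum_const, nsmul_eq_mul, mul_one]
        have heq : x i = y i := (Finset.mem_filter.1 hi).2
        rcases hpm x hx i with h | h <;> rw [← heq, h] <;> ring
      have h2 : ∑ i ∈ Ac, x i * y i = -((Ac.card : ℤ)) := by
        have : ∑ i ∈ Ac, x i * y i = ∑ _i ∈ Ac, (-1 : ℤ) := by
          refine Finset.sum_congr rfl fun i hi => ?_
          have hne : x i ≠ y i := by
            have := (Finset.mem_filter.1 hi).2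
            simpa using this
          rcases hpm x hx i with h | h <;> rcases hpm y hy i with h' | h' <;> simp_all
        rw [this, Finset.sum_const, nsmul_eq_mul, mul_neg_one]
      rw [hsplit, h1, h2]
      have : (Ac.card : ℤ) = (n : ℤ) - ((agrSet x y).card : ℤ) := by
        have := hcards
        push_cast [← this]
        ring
      rw [this]
      ring
    have hip := horth x hx y hy hxy
    have hip' : ipNorm n x y ≤ γ := le_trans (le_abs_self _) hip
    rw [ipNorm, hsum] at hip'
    have : ((2 * ((agrSet x y).card : ℤ) - n : ℤ) : ℝ) ≤ γ * n := by
      rw [div_le_iff₀ (by positivity)] at hip'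
      exact hip'
    push_cast at this
    linarith
  -- collision equivalence between projSet and coordinatewise agreement
  have hproj_eq : ∀ x ∈ F, ∀ y ∈ F, ∀ t : Fin r → Fin n,
      (projSet t x = projSet t y ↔ ∀ j, t j ∈ agrSet x y) := by
    intro x hx y hy t
    constructor
    · intro h j
      have hj : x (t j) = 1 ↔ y (t j) = 1 := by
        rw [← mem_projSet t x j, ← mem_projSet t y j, h]
      simp only [agrSet, Finset.mem_filter, Finset.mem_univ, true_and]
      rcases hpm x hx (t j) with h1 | h1 <;> rcases hpm y hy (t j) with h2 | h2 <;>
        simp_all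
    · intro h
      ext j
      rw [mem_projSet, mem_projSet]
      have := h j
      simp only [agrSet, Finset.mem_filter, Finset.mem_univ, true_and] at this
      rw [this]
  -- main double counting inequality in ℕ
  have hmain : n ^ r * F.card ^ 2
      ≤ B * ∑ x ∈ F, ∑ y ∈ F, (agrSet x y).card ^ r := by
    have step1 : ∀ t : Fin r → Fin n, F.card ^ 2
        ≤ B * ∑ x ∈ F, ∑ y ∈ F, (if ∀ j, t j ∈ agrSet x y then 1 else 0) := by
      intro t
      have h1 := collision_lb F (projSet t)
      have h2 : ∑ x ∈ F, ∑ y ∈ F, (if projSet t x = projSet t y then 1 else 0)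
          = ∑ x ∈ F, ∑ y ∈ F, (if ∀ j, t j ∈ agrSet x y then 1 else 0) := by
        refine Finset.sum_congr rfl fun x hx => Finset.sum_congr rfl fun y hy => ?_
        simp only [hproj_eq x hx y hy t]
      rw [h2] at h1
      exact le_trans h1 (Nat.mul_le_mul_right _ (image_projSet_card_le F hpm hdvc t))
    calc n ^ r * F.card ^ 2 = ∑ _t : Fin r → Fin n, F.card ^ 2 := by
          rw [Finset.sum_const, Finset.card_univ, Fintype.card_fun]
          simp [Fintype.card_fin, smul_eq_mul]
      _ ≤ ∑ t : Fin r → Fin n,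
            B * ∑ x ∈ F, ∑ y ∈ F, (if ∀ j, t j ∈ agrSet x y then 1 else 0) :=
          Finset.sum_le_sum fun t _ => step1 t
      _ = B * ∑ x ∈ F, ∑ y ∈ F,
            ∑ t : Fin r → Fin n, (if ∀ j, t j ∈ agrSet x y then 1 else 0) := by
          rw [← Finset.mul_sum]
          congr 1
          rw [Finset.sum_comm]
          refine Finset.sum_congr rfl fun x _ => Finset.sum_comm
      _ = B * ∑ x ∈ F, ∑ y ∈ F, (agrSet x y).card ^ r := by
          congr 1
          exact Finset.sum_congr rfl fun x _ => Finset.sum_congr rfl fun y _ =>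
            tuple_count r (agrSet x y)
  -- cast to ℝ and bound the RHS sum
  set m : ℝ := (F.card : ℝ) with hm
  set q : ℝ := ((1 + γ) / 2) ^ r with hq
  have hm2 : (2 : ℝ) ≤ m := by rw [hm]; exact_mod_cast hcard
  have hq0 : 0 < q := by
    apply pow_pos; linarith
  have hS : (∑ x ∈ F, ∑ y ∈ F, ((agrSet x y).card : ℝ) ^ r)
      ≤ m * (n : ℝ) ^ r + (m ^ 2 - m) * ((n : ℝ) ^ r * q) := by
    have hdiag : ∀ x ∈ F, ((agrSet x x).card : ℝ) ^ r = (n : ℝ) ^ r := by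
      intro x hx
      have : agrSet x x = Finset.univ := by
        ext i; simp [agrSet]
      rw [this, Finset.card_univ, Fintype.card_fin]
    have hoff : ∀ x ∈ F, ∀ y ∈ F, x ≠ y →
        ((agrSet x y).card : ℝ) ^ r ≤ (n : ℝ) ^ r * q := by
      intro x hx y hy hxy
      have h1 := hagr x hx y hy hxy
      have h2 : ((agrSet x y).card : ℝ) ^ r ≤ ((n : ℝ) * ((1 + γ) / 2)) ^ r :=
        pow_le_pow_left₀ (by positivity) h1 r
      rw [mul_pow] at h2
      exact h2
    have hsplit : ∀ x ∈ F, ∑ y ∈ F, ((agrSet x y).card : ℝ) ^ r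
        ≤ (n : ℝ) ^ r + (m - 1) * ((n : ℝ) ^ r * q) := by
      intro x hx
      rw [← Finset.add_sum_erase F _ hx, hdiag x hx]
      gcongr
      calc ∑ y ∈ F.erase x, ((agrSet x y).card : ℝ) ^ r
          ≤ ∑ _y ∈ F.erase x, (n : ℝ) ^ r * q :=
            Finset.sum_le_sum fun y hy =>
              hoff x hx y (Finset.mem_of_mem_erase hy)
                (fun h => (Finset.ne_of_mem_erase hy) h.symm)
        _ = (m - 1) * ((n : ℝ) ^ r * q) := by
            rw [Finset.sum_const, Finset.card_erase_of_mem hx, nsmul_eq_mul]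
            congr 1
            rw [hm]
            have : (1 : ℕ) ≤ F.card := le_trans one_le_two hcard
            push_cast [this]
            ring
    calc ∑ x ∈ F, ∑ y ∈ F, ((agrSet x y).card : ℝ) ^ r
        ≤ ∑ _x ∈ F, ((n : ℝ) ^ r + (m - 1) * ((n : ℝ) ^ r * q)) :=
          Finset.sum_le_sum hsplit
      _ = m * ((n : ℝ) ^ r + (m - 1) * ((n : ℝ) ^ r * q)) := by
          rw [Finset.sum_const, nsmul_eq_mul]
      _ = m * (n : ℝ) ^ r + (m ^ 2 - m) * ((n : ℝ) ^ r * q) := by ring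
  have hBpos : 0 < (B : ℝ) := by
    have : 1 ≤ B := by
      rw [hB]
      calc 1 = r.choose 0 := (Nat.choose_zero_right r).symm
        _ ≤ ∑ i ∈ Finset.range (d + 1), r.choose i :=
          Finset.single_le_sum (f := fun i => r.choose i) (fun i _ => Nat.zero_le _)
            (Finset.mem_range.2 (Nat.succ_pos d))
    exact_mod_cast Nat.lt_of_lt_of_le Nat.zero_lt_one this
  have hNpos : (0 : ℝ) < (n : ℝ) ^ r := by positivity
  have hmainR : (n : ℝ) ^ r * m ^ 2
      ≤ (B : ℝ) * (m * (n : ℝ) ^ r + (m ^ 2 - m) * ((n : ℝ) ^ r * q)) := by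
    have h1 : ((n ^ r * F.card ^ 2 : ℕ) : ℝ)
        ≤ ((B * ∑ x ∈ F, ∑ y ∈ F, (agrSet x y).card ^ r : ℕ) : ℝ) := by exact_mod_cast hmain
    push_cast at h1
    calc (n : ℝ) ^ r * m ^ 2 ≤ (B : ℝ) * ∑ x ∈ F, ∑ y ∈ F, ((agrSet x y).card : ℝ) ^ r := h1
      _ ≤ _ := by
        apply mul_le_mul_of_nonneg_left hS (le_of_lt hBpos)
  -- final arithmetic
  have hgoalB : (B : ℝ)⁻¹ < 1 / m + q := by
    have hm0 : 0 < m := lt_of_lt_of_le two_pos hm2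
    have hkey : m ^ 2 ≤ (B : ℝ) * (m + (m ^ 2 - m) * q) := by
      have := hmainR
      nlinarith [hNpos]
    have hstrict : (B : ℝ) * (m + (m ^ 2 - m) * q) < (B : ℝ) * (m ^ 2 * (1 / m + q)) := by
      apply mul_lt_mul_of_pos_left _ hBpos
      have : m ^ 2 * (1 / m + q) = m + m ^ 2 * q := by
        field_simp
      rw [this]
      nlinarith
    rw [inv_lt_iff_one_lt_mul₀ hBpos]
    have h2 : m ^ 2 < (B : ℝ) * (m ^ 2 * (1 / m + q)) := lt_of_le_of_lt hkey hstrict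
    have hmsq : 0 < m ^ 2 := by positivity
    nlinarith [h2, hmsq]
  have hBcast : ((B : ℕ) : ℝ) = ∑ i ∈ Finset.range (d + 1), (r.choose i : ℝ) := by
    rw [hB]; push_cast; rfl
  rw [← hBcast]
  exact hgoalB
end

section
/- For all integers n and i with 1 ≤ i ≤ n-1, the binomial coefficient satisfies C(n,i) < (1/√(2π·i·(1 - i/n))) · 2^{n·H(i/n)}. -/
open Real Nat Stirling

namespace Stirling

theorem stirlingSeq'_strictAnti : StrictAnti (stirlingSeq ∘ succ) :=
  strictAnti_nat_of_succ_lt fun n => by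
    have hlog_lt : (0 : ℝ) < log (stirlingSeq (n + 1)) - log (stirlingSeq (n + 2)) :=
      hasSum_lt (f := fun _ : ℕ => (0 : ℝ)) (i := 0) (fun k => by positivity) (by positivity)
        hasSum_zero (log_stirlingSeq_sdiff_hasSum n)
    exact (log_lt_log_iff (stirlingSeq'_pos _) (stirlingSeq'_pos _)).mp (sub_pos.mp hlog_lt)

theorem stirlingSeq_lt_stirlingSeq {a b : ℕ} (ha : a ≠ 0) (hab : a < b) :
    stirlingSeq b < stirlingSeq a := by
  obtain ⟨k, rfl⟩ := exists_eq_succ_of_ne_zero ha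
  obtain ⟨l, rfl⟩ := exists_eq_succ_of_ne_zero (by omega : b ≠ 0)
  exact stirlingSeq'_strictAnti (succ_lt_succ_iff.mp hab)

theorem stirlingSeq_pos {n : ℕ} (hn : n ≠ 0) : 0 < stirlingSeq n :=
  (sqrt_pos.2 pi_pos).trans_le (sqrt_pi_le_stirlingSeq hn)

theorem stirlingSeq_add_mul_sqrt_pi_lt {i m : ℕ} (hi : i ≠ 0) (hm : m ≠ 0) :
    stirlingSeq (i + m) * √π < stirlingSeq i * stirlingSeq m := calc
  stirlingSeq (i + m) * √π < stirlingSeq i * √π := by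
    gcongr
    exact stirlingSeq_lt_stirlingSeq hi (by omega)
  _ ≤ stirlingSeq i * stirlingSeq m := by
    gcongr
    · exact (stirlingSeq_pos hi).le
    · exact sqrt_pi_le_stirlingSeq hm

theorem factorial_eq_stirlingSeq_mul {n : ℕ} (hn : n ≠ 0) :
    (n ! : ℝ) = stirlingSeq n * (√(2 * n) * (n / exp 1) ^ n) := by
  rw [stirlingSeq, div_mul_cancel₀]
  positivity

theorem add_choose_mul_stirlingSeq_mul {i m : ℕ} (hi : i ≠ 0) (hm : m ≠ 0) :
    ((i + m).choose i : ℝ) * (stirlingSeq i * stirlingSeq m)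
      = stirlingSeq (i + m) * (√((i + m) / (2 * i * m)) * ((i + m) ^ (i + m) / (i ^ i * m ^ m))) := by
  have hfac : ((i + m).choose i : ℝ) * i ! * m ! = (i + m)! := by
    have := Nat.add_choose_mul_factorial_mul_factorial i m
    rw [Nat.choose_symm_add]
    exact_mod_cast this
  rw [factorial_eq_stirlingSeq_mul hi, factorial_eq_stirlingSeq_mul hm,
    factorial_eq_stirlingSeq_mul (by omega)] at hfac
  have hI : (0 : ℝ) < i := by positivity
  have hM : (0 : ℝ) < m := by positivity
  have hsqrt : √(2 * (i + m : ℝ)) = √((i + m) / (2 * i * m)) * (√(2 * i) * √(2 * m)) := by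
    rw [← sqrt_mul (by positivity), ← sqrt_mul (by positivity)]
    congr 1
    field_simp
  have hpow : ((i + m : ℝ) / exp 1) ^ (i + m)
      = (i + m) ^ (i + m) / (i ^ i * m ^ m) * ((i / exp 1) ^ i * (m / exp 1) ^ m) := by
    rw [div_pow, div_pow, div_pow, pow_add]
    field_simp
    ring
  push_cast at hfac
  rw [hsqrt, hpow] at hfac
  refine mul_right_cancel₀ (b := √(2 * i) * √(2 * m) * ((i / exp 1) ^ i * (m / exp 1) ^ m))
    (by positivity) ?_
  linear_combination hfac

end Stirling

theorem two_rpow_mul_binH_div_add {a b : ℝ} (ha : 0 < a) (hb : 0 < b) :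
    (2 : ℝ) ^ ((a + b) * binH (a / (a + b))) = (a + b) ^ (a + b) / (a ^ a * b ^ b) := by
  have hab : 0 < a + b := add_pos ha hb
  have hcompl : 1 - a / (a + b) = b / (a + b) := by field_simp; ring
  rw [← rpow_logb two_pos (by norm_num) (by positivity : 0 < (a + b) ^ (a + b) / (a ^ a * b ^ b))]
  congr 1
  simp only [binH, hcompl, logb, log_div ha.ne' hab.ne', log_div hb.ne' hab.ne',
    log_div (rpow_pos_of_pos hab _).ne' (mul_pos (rpow_pos_of_pos ha _) (rpow_pos_of_pos hb _)).ne',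
    log_mul (rpow_pos_of_pos ha _).ne' (rpow_pos_of_pos hb _).ne', log_rpow hab, log_rpow ha, log_rpow hb]
  field_simp
  ring

theorem one_div_sqrt_mul_two_rpow_binH {i m : ℕ} (hi : i ≠ 0) (hm : m ≠ 0) :
    1 / √(2 * π * i * (1 - i / ((i + m : ℕ) : ℝ)))
        * (2 : ℝ) ^ (((i + m : ℕ) : ℝ) * binH (i / ((i + m : ℕ) : ℝ)))
      = √((i + m) / (2 * i * m)) * ((i + m) ^ (i + m) / (i ^ i * m ^ m)) / √π := by
  have hI : (0 : ℝ) < i := by positivity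
  have hM : (0 : ℝ) < m := by positivity
  have hdenom : 2 * π * i * (1 - i / (i + m : ℝ)) = π / ((i + m) / (2 * i * m)) := by
    field_simp
    ring
  push_cast
  rw [two_rpow_mul_binH_div_add hI hM, hdenom, sqrt_div' _ (by positivity)]
  simp only [← Nat.cast_add, rpow_natCast]
  push_cast
  field_simp

/-- For `1 ≤ i ≤ n-1`, `C(n,i) < (1/√(2π·i·(1-i/n))) · 2^(n·H(i/n))`. -/
theorem stmt10 (n i : ℕ) (h1 : 1 ≤ i) (h2 : i ≤ n - 1) :
    (n.choose i : ℝ)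
      < (1 / Real.sqrt (2 * Real.pi * (i : ℝ) * (1 - (i : ℝ) / (n : ℝ))))
        * (2 : ℝ) ^ ((n : ℝ) * binH ((i : ℝ) / (n : ℝ))) := by
  obtain ⟨m, rfl⟩ : ∃ m, n = i + m := ⟨n - i, by omega⟩
  have hi : i ≠ 0 := by omega
  have hm : m ≠ 0 := by omega
  rw [one_div_sqrt_mul_two_rpow_binH hi hm, lt_div_iff₀ (by positivity)]
  set K : ℝ := √((i + m) / (2 * i * m)) * ((i + m) ^ (i + m) / (i ^ i * m ^ m))
  have hK : 0 < K := by positivity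
  have hchoose := add_choose_mul_stirlingSeq_mul hi hm
  refine lt_of_mul_lt_mul_right ?_ (mul_pos (stirlingSeq_pos hi) (stirlingSeq_pos hm)).le
  calc ((i + m).choose i : ℝ) * √π * (stirlingSeq i * stirlingSeq m)
      = stirlingSeq (i + m) * √π * K := by linear_combination √π * hchoose
    _ < stirlingSeq i * stirlingSeq m * K := 
      mul_lt_mul_of_pos_right (stirlingSeq_add_mul_sqrt_pi_lt hi hm) hK
    _ = K * (stirlingSeq i * stirlingSeq m) := mul_comm _ _
end

section
/- Let n ≥ 2, c > 1, and let F ⊆ {-1,1}^n be a set such that every pair of distinct x, y ∈ F satisfies |⟨x,y⟩| ≤ 1/(c√n). Then |F| ≤ (c²n - 1)/(c² - 1). More generally, if every pair of distinct elements satisfies |⟨x,y⟩| ≤ γ with γ² < 1/n, then 1 - 1/|F| ≤ (1 - 1/n)/(1 - γ²). -/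
/-!
Let `m = |F|` and let `G = (⟨x, y⟩)_{x,y ∈ F}` be the unnormalized Gram matrix. Its squared Frobenius
norm is `∑_{i,j} (∑_{x ∈ F} x_i x_j)²`, which is at least its `i = j` part
`∑_i (∑_{x ∈ F} x_i²)² = n m²`. On the other
hand the diagonal entries of `G` are `n` and the off-diagonal ones are at most `γ n` in absolute value,
so `n m² ≤ m n² + m (m - 1) γ² n²`, i.e. `m ≤ n + (m - 1) γ² n`. Both bounds are rearrangements of this.
-/

open Finset

section GramMatrix

variable {R ι : Type*} [Fintype ι]

theorem sum_sum_dotProduct_sq_eq [CommRing R] (F : Finset (ι → R)) :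
    ∑ x ∈ F, ∑ y ∈ F, (x ⬝ᵥ y) ^ 2 = ∑ i, ∑ j, (∑ x ∈ F, x i * x j) ^ 2 := by
  simp only [sq, dotProduct, sum_mul_sum, mul_mul_mul_comm]
  rw [sum_comm_cycle]
  exact sum_congr rfl fun i _ => sum_comm_cycle

theorem sum_sq_sum_mul_self_le_sum_sum_dotProduct_sq [CommRing R] [LinearOrder R]
    [IsStrictOrderedRing R] (F : Finset (ι → R)) :
    ∑ i, (∑ x ∈ F, x i * x i) ^ 2 ≤ ∑ x ∈ F, ∑ y ∈ F, (x ⬝ᵥ y) ^ 2 := by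
  rw [sum_sum_dotProduct_sq_eq]
  exact sum_le_sum fun i _ =>
    single_le_sum (f := fun j => (∑ x ∈ F, x i * x j) ^ 2) (fun j _ => sq_nonneg _) (mem_univ i)

theorem card_mul_card_sq_le_sum_sum_dotProduct_sq [CommRing R] [LinearOrder R]
    [IsStrictOrderedRing R] (F : Finset (ι → R)) (hF : ∀ x ∈ F, ∀ i, x i * x i = 1) :
    (Fintype.card ι : R) * (#F : R) ^ 2 ≤ ∑ x ∈ F, ∑ y ∈ F, (x ⬝ᵥ y) ^ 2 := by
  have hdiag : ∀ i, ∑ x ∈ F, x i * x i = #F := fun i => by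
    rw [sum_congr rfl fun x hx => hF x hx i]; simp
  simpa [hdiag] using sum_sq_sum_mul_self_le_sum_sum_dotProduct_sq F

end GramMatrix

theorem sum_sum_le_of_diag_le_of_offDiag_le {α R : Type*} [CommRing R] [PartialOrder R]
    [IsOrderedRing R] (F : Finset α) (f : α → α → R) {a b : R}
    (ha : ∀ x ∈ F, f x x ≤ a) (hb : ∀ x ∈ F, ∀ y ∈ F, x ≠ y → f x y ≤ b) :
    ∑ x ∈ F, ∑ y ∈ F, f x y ≤ #F * (a + (#F - 1) * b) := by
  classical
  rw [← nsmul_eq_mul]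
  refine sum_le_card_nsmul _ _ _ fun x hx => ?_
  rw [← add_sum_erase _ _ hx]
  have hoff : ∑ y ∈ F.erase x, f x y ≤ #(F.erase x) • b :=
    sum_le_card_nsmul _ _ _ fun y hy => hb x hx y (mem_of_mem_erase hy) (ne_of_mem_erase hy).symm
  rw [card_erase_of_mem hx, nsmul_eq_mul, Nat.cast_pred (card_pos.2 ⟨x, hx⟩)] at hoff
  exact add_le_add (ha x hx) hoff

theorem ipNorm_eq (n : ℕ) (x y : Fin n → ℤ) : ipNorm n x y = (x ⬝ᵥ y : ℤ) / n := rfl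

theorem card_le_of_abs_ipNorm_le {n : ℕ} (hn : 0 < n) {F : Finset (Fin n → ℤ)}
    (hpm : ∀ x ∈ F, ∀ i, x i = 1 ∨ x i = -1) (hne : F.Nonempty) {γ : ℝ}
    (hγ : ∀ x ∈ F, ∀ y ∈ F, x ≠ y → |ipNorm n x y| ≤ γ) :
    (#F : ℝ) ≤ n + (#F - 1) * (γ ^ 2 * n) := by
  have hsq : ∀ x ∈ F, ∀ i, x i * x i = 1 := fun x hx i => mul_self_eq_one_iff.2 (hpm x hx i)
  have hn' : (0 : ℝ) < n := by exact_mod_cast hn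
  have lower : (n : ℝ) * (#F : ℝ) ^ 2 ≤ ∑ x ∈ F, ∑ y ∈ F, ((x ⬝ᵥ y : ℤ) : ℝ) ^ 2 := by
    exact_mod_cast Fintype.card_fin n ▸ card_mul_card_sq_le_sum_sum_dotProduct_sq F hsq
  have upper : ∑ x ∈ F, ∑ y ∈ F, ((x ⬝ᵥ y : ℤ) : ℝ) ^ 2 ≤
      #F * (n ^ 2 + (#F - 1) * (γ * n) ^ 2) := by
    refine sum_sum_le_of_diag_le_of_offDiag_le F _ (fun x hx => ?_) fun x hx y hy hxy => ?_
    · have : x ⬝ᵥ x = n := by simp [dotProduct, sum_congr rfl fun i _ => hsq x hx i]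
      simp [this]
    · have h := hγ x hx y hy hxy
      rw [ipNorm_eq, abs_div, Nat.abs_cast, div_le_iff₀ hn'] at h
      rw [← sq_abs]
      gcongr
  have h : (#F : ℝ) * n * #F ≤ #F * n * (n + (#F - 1) * (γ ^ 2 * n)) := by nlinarith
  exact le_of_mul_le_mul_left h (by have := hne.card_pos; positivity)

theorem one_sub_inv_le_div_of_le_add {m n g : ℝ} (hm : 0 < m) (hn : 0 < n) (hg : g < 1)
    (h : m ≤ n + (m - 1) * (g * n)) : 1 - 1 / m ≤ (1 - 1 / n) / (1 - g) := by
  have key : (1 - 1 / m) * (1 - g) = 1 - 1 / n - (n + (m - 1) * (g * n) - m) / (m * n) := by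
    field_simp; ring
  rw [le_div_iff₀ (sub_pos.2 hg), key]
  have : 0 ≤ (n + (m - 1) * (g * n) - m) / (m * n) := div_nonneg (by linarith) (by positivity)
  linarith

theorem le_div_of_le_add_div_sq {m n c : ℝ} (hc : 1 < c) (h : m ≤ n + (m - 1) * (1 / c ^ 2)) :
    m ≤ (c ^ 2 * n - 1) / (c ^ 2 - 1) := by
  have hc2 : 0 < c ^ 2 := by positivity
  rw [le_div_iff₀ (by nlinarith)]
  rw [← mul_le_mul_iff_of_pos_left hc2] at h
  field_simp at h
  linarith

/-- The Roth–Seroussi bound: for a nonempty `F ⊆ {-1,1}^n` (`n ≥ 2`), if all distinct pairs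
satisfy `|⟨x,y⟩| ≤ 1/(c√n)` with `c > 1` then `|F| ≤ (c²n-1)/(c²-1)`; more generally, if all
distinct pairs satisfy `|⟨x,y⟩| ≤ γ` with `γ² < 1/n`, then `1 - 1/|F| ≤ (1-1/n)/(1-γ²)`. -/
theorem stmt15 (n : ℕ) (hn : 2 ≤ n) (F : Finset (Fin n → ℤ))
    (hpm : ∀ x ∈ F, ∀ i, x i = 1 ∨ x i = -1) (hne : F.Nonempty) :
    (∀ c : ℝ, 1 < c →
      (∀ x ∈ F, ∀ y ∈ F, x ≠ y → |ipNorm n x y| ≤ 1 / (c * Real.sqrt (n : ℝ))) →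
      (F.card : ℝ) ≤ (c ^ 2 * (n : ℝ) - 1) / (c ^ 2 - 1)) ∧
    (∀ γ : ℝ, γ ^ 2 < 1 / (n : ℝ) →
      (∀ x ∈ F, ∀ y ∈ F, x ≠ y → |ipNorm n x y| ≤ γ) →
      1 - 1 / (F.card : ℝ) ≤ (1 - 1 / (n : ℝ)) / (1 - γ ^ 2)) := by
  have hn0 : 0 < n := by omega
  refine ⟨fun c hc hb => ?_, fun γ hγ hb => ?_⟩
  · have h := card_le_of_abs_ipNorm_le hn0 hpm hne hb
    have hγn : (1 / (c * Real.sqrt n)) ^ 2 * n = 1 / c ^ 2 := by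
      rw [div_pow, mul_pow, Real.sq_sqrt (Nat.cast_nonneg n)]
      field_simp
    rw [hγn] at h
    exact le_div_of_le_add_div_sq hc h
  · have hγ1 : γ ^ 2 < 1 :=
      hγ.trans_le (div_le_one_of_le₀ (by exact_mod_cast hn0) (Nat.cast_nonneg n))
    exact one_sub_inv_le_div_of_le_add (by exact_mod_cast hne.card_pos) (by positivity) hγ1
      (card_le_of_abs_ipNorm_le hn0 hpm hne hb)
end

section
/- Let k ≥ 2, n ≥ 2, let F ⊆ {0,1,…,k-1}^n be a set with |F| ≥ 2, and let d be an integer such that for every r ≤ n and every index set I ⊆ {1,…,n} of size r, the projection of F onto the coordinates in I has cardinality at most Σ_{i=0}^{d} C(r,i)·k^i. Suppose γ ∈ [0,1) is such that every pair of distinct x, y ∈ F satisfies |γ_k(x,y)| ≤ γ. Then for every integer r with 2 ≤ r ≤ n, (Σ_{i=0}^{d} C(r,i)·k^i)^{-1} < 1/|F| + (1/k + (k-1)γ/k)^r. -/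
open Finset

/-- Normalized Hamming distance on `[k]^n`. -/
noncomputable def hamK (k n : ℕ) (x y : Fin n → Fin k) : ℝ :=
  ((Finset.univ.filter fun i => x i ≠ y i).card : ℝ) / n

/-- The `k`-ary correlation `γ_k(x,y) = 1 - (k/(k-1))·ρ(x,y)`. -/
noncomputable def gammaK (k n : ℕ) (x y : Fin n → Fin k) : ℝ :=
  1 - ((k : ℝ) / ((k : ℝ) - 1)) * hamK k n x y

/-!
Double counting. For a set `I` of `r` coordinates, the projection of `F` onto `I` takes at most
`S = Σ_{i ≤ d} C(r,i) kⁱ` values, so by Cauchy–Schwarz at least `|F|² / S` ordered pairs of `F × F`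
agree on `I`. Summing over all `I` gives `C(n,r) |F|² ≤ S · Σ_{x,y} C(a(x,y), r)`, where `a(x,y)`
is the number of coordinates on which `x` and `y` agree. The diagonal contributes `|F| C(n,r)`.
For `x ≠ y` the correlation bound says `a(x,y) ≤ p n` with `p = 1/k + (k-1)γ/k`, and `a(x,y) < n`,
so `C(a,r) < C(n,r) pʳ` as `r ≥ 2`. Hence `C(n,r) |F|² < S (|F| C(n,r) + |F|² C(n,r) pʳ)`, which
rearranges to `1/S < 1/|F| + pʳ`.
-/

namespace Finset

theorem card_filter_product_eq_sum_sq {α β : Type*} [DecidableEq β] (s : Finset α) (g : α → β) :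
    #{q ∈ s ×ˢ s | g q.1 = g q.2} = ∑ t ∈ s.image g, #{x ∈ s | g x = t} ^ 2 := by
  rw [card_eq_sum_card_fiberwise (f := fun q => g q.1) (t := s.image g)]
  · refine sum_congr rfl fun t _ => ?_
    rw [sq, ← card_product]
    congr 1
    ext q
    simp only [mem_filter, mem_product]
    grind
  · intro q hq
    exact mem_image_of_mem g (mem_product.1 (mem_filter.1 hq).1).1

theorem card_sq_le_card_image_mul_card_filter_product {α β : Type*} [DecidableEq β]
    (s : Finset α) (g : α → β) :
    #s ^ 2 ≤ #(s.image g) * #{q ∈ s ×ˢ s | g q.1 = g q.2} := by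
  rw [card_filter_product_eq_sum_sq, card_eq_sum_card_image g s]
  exact sq_sum_le_card_mul_sum_sq

theorem sum_powersetCard_card_filter_subset {ι κ : Type*} [Fintype ι] [DecidableEq ι] (r : ℕ)
    (Q : Finset κ) (A : κ → Finset ι) :
    ∑ I ∈ powersetCard r univ, #{q ∈ Q | I ⊆ A q} = ∑ q ∈ Q, (#(A q)).choose r := by
  simp only [card_filter]
  rw [sum_comm]
  refine sum_congr rfl fun q _ => ?_
  rw [← card_filter, ← card_powersetCard]
  congr 1
  ext I
  simp [mem_powersetCard, and_comm]

theorem sum_product_self_lt_of_offDiag_lt {α : Type*} [DecidableEq α] {s : Finset α}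
    (hs : 1 < #s) {f : α × α → ℝ} {a b : ℝ} (hb : 0 ≤ b) (hdiag : ∀ x ∈ s, f (x, x) ≤ a)
    (hoff : ∀ q ∈ s.offDiag, f q < b) : ∑ q ∈ s ×ˢ s, f q < #s * a + #s ^ 2 * b := by
  have hne : s.offDiag.Nonempty := by
    obtain ⟨x, hx, y, hy, hxy⟩ := one_lt_card.1 hs
    exact ⟨(x, y), mem_offDiag.2 ⟨hx, hy, hxy⟩⟩
  have hcard : (#s.offDiag : ℝ) ≤ #s ^ 2 := by
    exact_mod_cast (offDiag_card s).trans_le (by rw [sq]; omega)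
  rw [← diag_union_offDiag, sum_union (disjoint_diag_offDiag s), sum_diag]
  calc ∑ x ∈ s, f (x, x) + ∑ q ∈ s.offDiag, f q < ∑ _x ∈ s, a + ∑ _q ∈ s.offDiag, b :=
        add_lt_add_of_le_of_lt (sum_le_sum hdiag) (sum_lt_sum_of_nonempty hne hoff)
    _ ≤ #s * a + #s ^ 2 * b := by
      rw [sum_const, sum_const, nsmul_eq_mul, nsmul_eq_mul]
      gcongr

end Finset

-- `C(a,r) / C(n,r) = ∏_{i<r} (a-i)/(n-i)`, and each factor is at most `a/n`, strictly so for `i = 1`.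
theorem Nat.choose_mul_pow_lt_choose_mul_pow {a n r : ℕ} (hr : 2 ≤ r) (hra : r ≤ a)
    (han : a < n) : a.choose r * n ^ r < n.choose r * a ^ r := by
  have key : a.descFactorial r * n ^ r < n.descFactorial r * a ^ r := by
    rw [Nat.descFactorial_eq_prod_range, Nat.descFactorial_eq_prod_range, pow_eq_prod_const n,
      pow_eq_prod_const a, ← prod_mul_distrib, ← prod_mul_distrib]
    refine prod_lt_prod (fun i hi => ?_) (fun i _ => ?_) ⟨1, mem_range.2 (by omega), ?_⟩
    · have : i < a := (mem_range.1 hi).trans_le hra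
      exact Nat.mul_pos (by omega) (by omega)
    · rw [Nat.sub_mul, Nat.sub_mul, mul_comm n a]
      exact Nat.sub_le_sub_left (Nat.mul_le_mul_left i han.le) _
    · rw [Nat.sub_mul, Nat.sub_mul, one_mul, one_mul, mul_comm n a]
      have : n ≤ a * n := Nat.le_mul_of_pos_left n (by omega)
      omega
  rw [Nat.descFactorial_eq_factorial_mul_choose, Nat.descFactorial_eq_factorial_mul_choose,
    mul_assoc, mul_assoc] at key
  exact Nat.lt_of_mul_lt_mul_left key

theorem Nat.choose_lt_choose_mul_pow {a n r : ℕ} {q : ℝ} (hr : 2 ≤ r) (hrn : r ≤ n)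
    (han : a < n) (hq : 0 < q) (haq : a ≤ q * n) : (a.choose r : ℝ) < n.choose r * q ^ r := by
  have hn : (0 : ℝ) < n := by exact_mod_cast (by omega : 0 < n)
  rcases lt_or_ge a r with har | hra
  · rw [Nat.choose_eq_zero_of_lt har, Nat.cast_zero]
    exact mul_pos (by exact_mod_cast Nat.choose_pos hrn) (pow_pos hq r)
  · have key : (a.choose r * n ^ r : ℝ) < n.choose r * a ^ r := by
      exact_mod_cast Nat.choose_mul_pow_lt_choose_mul_pow hr hra han
    rw [← mul_lt_mul_iff_of_pos_right (pow_pos hn r)]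
    calc (a.choose r * n ^ r : ℝ) < n.choose r * a ^ r := key
      _ ≤ n.choose r * (q * n) ^ r := by gcongr
      _ = n.choose r * q ^ r * n ^ r := by ring

section Agreement

variable {ι β : Type*} [Fintype ι] [DecidableEq β]

def agreeSet (x y : ι → β) : Finset ι := {i | x i = y i}

theorem agreeSet_self (x : ι → β) : agreeSet x x = univ := by
  simp [agreeSet]

theorem card_agreeSet_lt {x y : ι → β} (h : x ≠ y) : #(agreeSet x y) < Fintype.card ι := by
  obtain ⟨i, hi⟩ := Function.ne_iff.1 h
  exact card_lt_univ_of_notMem (x := i) (by simpa [agreeSet] using hi)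

theorem subset_agreeSet_iff {x y : ι → β} {I : Finset ι} :
    I ⊆ agreeSet x y ↔ (fun i : I => x i) = fun i : I => y i := by
  simp [subset_iff, agreeSet, funext_iff]

theorem choose_mul_card_sq_le_of_card_image_le [DecidableEq ι] {F : Finset (ι → β)} {r S : ℕ}
    (hS : ∀ I : Finset ι, #I = r → #(F.image fun (x : ι → β) (i : I) => x i) ≤ S) :
    (Fintype.card ι).choose r * #F ^ 2 ≤ S * ∑ q ∈ F ×ˢ F, (#(agreeSet q.1 q.2)).choose r := by
  calc (Fintype.card ι).choose r * #F ^ 2 = ∑ _I ∈ powersetCard r (univ : Finset ι), #F ^ 2 := by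
        rw [sum_const, card_powersetCard, card_univ, smul_eq_mul]
    _ ≤ ∑ I ∈ powersetCard r univ, S * #{q ∈ F ×ˢ F | I ⊆ agreeSet q.1 q.2} := by
        refine sum_le_sum fun I hI => ?_
        simp_rw [subset_agreeSet_iff]
        exact (card_sq_le_card_image_mul_card_filter_product F fun (x : ι → β) (i : I) => x i).trans
          (Nat.mul_le_mul_right _ (hS I (mem_powersetCard.1 hI).2))
    _ = S * ∑ q ∈ F ×ˢ F, (#(agreeSet q.1 q.2)).choose r := by
        rw [← mul_sum, sum_powersetCard_card_filter_subset]

end Agreement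

theorem hamK_mul_eq {k n : ℕ} (x y : Fin n → Fin k) :
    hamK k n x y * n = n - #(agreeSet x y) := by
  have hsplit : #(agreeSet x y) + #{i | x i ≠ y i} = n := by
    simpa [agreeSet] using card_filter_add_card_filter_not (s := univ) fun i => x i = y i
  have hdisagree : (#{i | x i ≠ y i} : ℝ) = n - #(agreeSet x y) := by
    rw [eq_sub_iff_add_eq, add_comm]
    exact_mod_cast hsplit
  rcases eq_or_ne n 0 with rfl | hn
  · simp [hamK, agreeSet]
  · rw [hamK, div_mul_cancel₀ _ (by exact_mod_cast hn), hdisagree]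

theorem card_agreeSet_le_of_gammaK_le {k n : ℕ} (hk : 1 < k) {x y : Fin n → Fin k} {γ : ℝ}
    (h : gammaK k n x y ≤ γ) : (#(agreeSet x y) : ℝ) ≤ (1 / k + (k - 1) * γ / k) * n := by
  have hk' : (1 : ℝ) < k := by exact_mod_cast hk
  have hk1 : (k : ℝ) - 1 ≠ 0 := by linarith
  have h1 : 1 - γ ≤ k / (k - 1) * hamK k n x y := by rw [gammaK] at h; linarith
  have h2 : (1 - γ) * ((k - 1) * n) ≤ k * (n - #(agreeSet x y)) :=
    calc (1 - γ) * ((k - 1) * n) ≤ k / (k - 1) * hamK k n x y * ((k - 1) * n) := by gcongr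
      _ = k * (hamK k n x y * n) := by field_simp
      _ = k * (n - #(agreeSet x y)) := by rw [hamK_mul_eq]
  rw [← add_div, div_mul_eq_mul_div, le_div_iff₀ (by positivity)]
  linarith

theorem inv_lt_one_div_add_of_mul_sq_lt {S m c t : ℝ} (hS : 0 < S) (hm : 0 < m) (hc : 0 < c)
    (h : c * m ^ 2 < S * (m * c + m ^ 2 * (c * t))) : S⁻¹ < 1 / m + t := by
  have h' : m ^ 2 < S * m + S * m ^ 2 * t := by
    refine lt_of_mul_lt_mul_left ?_ hc.le
    linarith
  have hdiff : 1 / m + t - S⁻¹ = (S * m + S * m ^ 2 * t - m ^ 2) / (S * m ^ 2) := by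
    field_simp
  rw [← sub_pos, hdiff]
  exact div_pos (by linarith) (by positivity)

theorem stmt17_general (k n d : ℕ) (hk : 2 ≤ k) (F : Finset (Fin n → Fin k))
    (hcard : 2 ≤ F.card)
    (hSauer : ∀ r : ℕ, r ≤ n → ∀ I : Finset (Fin n), I.card = r →
      (F.image (fun x => fun i : I => x i.1)).card
        ≤ ∑ i ∈ Finset.range (d + 1), r.choose i * k ^ i)
    (γ : ℝ) (hγ0 : 0 ≤ γ)
    (horth : ∀ x ∈ F, ∀ y ∈ F, x ≠ y → |gammaK k n x y| ≤ γ)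
    (r : ℕ) (hr2 : 2 ≤ r) (hrn : r ≤ n) :
    (∑ i ∈ Finset.range (d + 1), (r.choose i : ℝ) * (k : ℝ) ^ i)⁻¹
      < 1 / (F.card : ℝ) + (1 / (k : ℝ) + ((k : ℝ) - 1) * γ / (k : ℝ)) ^ r := by
  set p : ℝ := 1 / k + (k - 1) * γ / k
  have hp : 0 < p := by
    have : (1 : ℝ) ≤ k := by exact_mod_cast (by omega : 1 ≤ k)
    positivity
  have hS : 0 < ∑ i ∈ range (d + 1), (r.choose i : ℝ) * (k : ℝ) ^ i := by
    rw [sum_range_succ']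
    exact add_pos_of_nonneg_of_pos (by positivity) (by simp)
  have hlower : (n.choose r * #F ^ 2 : ℝ) ≤
      (∑ i ∈ range (d + 1), (r.choose i : ℝ) * (k : ℝ) ^ i) *
        ∑ q ∈ F ×ˢ F, ((#(agreeSet q.1 q.2)).choose r : ℝ) := by
    have := choose_mul_card_sq_le_of_card_image_le fun I hI => hSauer r hrn I hI
    rw [Fintype.card_fin] at this
    exact_mod_cast this
  have hupper : ∑ q ∈ F ×ˢ F, ((#(agreeSet q.1 q.2)).choose r : ℝ)
      < #F * n.choose r + #F ^ 2 * (n.choose r * p ^ r) := by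
    refine sum_product_self_lt_of_offDiag_lt hcard (by positivity)
      (fun x _ => by simp [agreeSet_self]) fun q hq => ?_
    obtain ⟨hx, hy, hxy⟩ := mem_offDiag.1 hq
    exact Nat.choose_lt_choose_mul_pow hr2 hrn (by simpa using card_agreeSet_lt hxy) hp
      (card_agreeSet_le_of_gammaK_le hk (abs_le.1 (horth _ hx _ hy hxy)).2)
  exact inv_lt_one_div_add_of_mul_sq_lt hS (by exact_mod_cast (by omega : 0 < #F))
    (by exact_mod_cast Nat.choose_pos hrn) (hlower.trans_lt (mul_lt_mul_of_pos_left hupper hS))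

/-- The `k`-ary key projection inequality: if `F ⊆ [k]^n` with `|F| ≥ 2` satisfies the
generalized Sauer bound with parameter `d` and all distinct pairs satisfy `|γ_k(x,y)| ≤ γ`
with `γ ∈ [0,1)`, then for every integer `2 ≤ r ≤ n`,
`(Σ_{i=0}^d C(r,i)·k^i)⁻¹ < 1/|F| + (1/k + (k-1)γ/k)^r`. -/
theorem stmt17 (k n d : ℕ) (hk : 2 ≤ k) (hn : 2 ≤ n) (F : Finset (Fin n → Fin k))
    (hcard : 2 ≤ F.card)
    (hSauer : ∀ r : ℕ, r ≤ n → ∀ I : Finset (Fin n), I.card = r →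
      (F.image (fun x => fun i : I => x i.1)).card
        ≤ ∑ i ∈ Finset.range (d + 1), r.choose i * k ^ i)
    (γ : ℝ) (hγ0 : 0 ≤ γ) (hγ1 : γ < 1)
    (horth : ∀ x ∈ F, ∀ y ∈ F, x ≠ y → |gammaK k n x y| ≤ γ)
    (r : ℕ) (hr2 : 2 ≤ r) (hrn : r ≤ n) :
    (∑ i ∈ Finset.range (d + 1), (r.choose i : ℝ) * (k : ℝ) ^ i)⁻¹
      < 1 / (F.card : ℝ) + (1 / (k : ℝ) + ((k : ℝ) - 1) * γ / (k : ℝ)) ^ r :=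
  stmt17_general k n d hk F hcard hSauer γ hγ0 horth r hr2 hrn
end
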